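/- arXiv:1104.4563 — 10 statements merged into one kernel-verified Lean document; each statement's English description precedes it below -/
import Mathlib

section
/- Fix A ∈ ℝ. If g is C² on an open neighborhood of A and ∫_{(1,∞)} Π(du) · max_{A−u ≤ ζ ≤ A} |g(ζ) − g(A)| < ∞, then ρ̄_{g,A} := ∫_{(0,∞)} Π(du) ∫_0^u e^{−Φz} |g(z+A−u) − g(A)| dz < ∞. -/
open MeasureTheory Real Set Filter

/-!
Split `(0, ∞)` at `1` and write `D(u) = leftDeviation g A u = sup_{A-u ≤ ζ ≤ A} |g ζ - g A|`; the
inner integral is at most `(∫_0^u e^{-Φz} dz) · D(u)`. For `u ≤ 1`, differentiability of `g` at `A`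
(and local boundedness away from `A`) gives `D(u) ≤ c u`, while `∫_0^u e^{-Φz} dz ≤ u`, so the
integrand is `O(min 1 u²)`, which the Lévy condition integrates. For `u > 1` the inner integral is
at most `D(u) / Φ`, integrable by (C2).
-/

open Asymptotics Topology

lemma setLIntegral_ofReal_mul_le {α : Type*} [MeasurableSpace α] {μ : Measure α} {s : Set α}
    (hs : MeasurableSet s) {w h : α → ℝ} {S : ℝ} (hw : ∀ z ∈ s, 0 ≤ w z)
    (hh : ∀ z ∈ s, h z ≤ S) :
    ∫⁻ z in s, ENNReal.ofReal (w z * h z) ∂μ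
      ≤ (∫⁻ z in s, ENNReal.ofReal (w z) ∂μ) * ENNReal.ofReal S := by
  rw [← lintegral_mul_const' _ _ ENNReal.ofReal_ne_top]
  refine setLIntegral_mono' hs fun z hz => ?_
  rw [← ENNReal.ofReal_mul (hw z hz)]
  exact ENNReal.ofReal_le_ofReal (mul_le_mul_of_nonneg_left (hh z hz) (hw z hz))

lemma setLIntegral_Ioo_exp_neg_mul_le {Φ : ℝ} (hΦ : 0 ≤ Φ) (u : ℝ) :
    ∫⁻ z in Ioo 0 u, ENNReal.ofReal (exp (-Φ * z)) ≤ ENNReal.ofReal u := by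
  calc ∫⁻ z in Ioo 0 u, ENNReal.ofReal (exp (-Φ * z))
      ≤ ∫⁻ _ in Ioo 0 u, 1 := setLIntegral_mono' measurableSet_Ioo fun z hz =>
        ENNReal.ofReal_le_one.2 (exp_le_one_iff.2 (by nlinarith [hz.1]))
    _ = ENNReal.ofReal u := by simp

noncomputable def leftDeviation (g : ℝ → ℝ) (A u : ℝ) : ℝ :=
  sSup ((fun ζ => |g ζ - g A|) '' Icc (A - u) A)

section

variable {g : ℝ → ℝ}

lemma bddAbove_abs_sub_image_Icc (hgb : ∀ K : Set ℝ, IsCompact K → ∃ M : ℝ, ∀ x ∈ K, |g x| ≤ M)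
    (A a b : ℝ) : BddAbove ((fun ζ => |g ζ - g A|) '' Icc a b) := by
  obtain ⟨M, hM⟩ := hgb _ isCompact_Icc
  refine ⟨M + |g A|, ?_⟩
  rintro _ ⟨x, hx, rfl⟩
  exact (abs_sub _ _).trans (add_le_add (hM x hx) le_rfl)

lemma abs_sub_le_leftDeviation (hgb : ∀ K : Set ℝ, IsCompact K → ∃ M : ℝ, ∀ x ∈ K, |g x| ≤ M)
    {A u ζ : ℝ} (hζ : ζ ∈ Icc (A - u) A) : |g ζ - g A| ≤ leftDeviation g A u :=
  le_csSup (bddAbove_abs_sub_image_Icc hgb _ _ _) (mem_image_of_mem _ hζ)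

lemma leftDeviation_mono (hgb : ∀ K : Set ℝ, IsCompact K → ∃ M : ℝ, ∀ x ∈ K, |g x| ≤ M)
    {A u v : ℝ} (hu : 0 ≤ u) (huv : u ≤ v) : leftDeviation g A u ≤ leftDeviation g A v :=
  csSup_le_csSup (bddAbove_abs_sub_image_Icc hgb _ _ _)
    ((nonempty_Icc.2 (by linarith)).image _) (image_mono (Icc_subset_Icc_left (by linarith)))

lemma leftDeviation_nonneg (hgb : ∀ K : Set ℝ, IsCompact K → ∃ M : ℝ, ∀ x ∈ K, |g x| ≤ M)
    {A u : ℝ} (hu : 0 ≤ u) : 0 ≤ leftDeviation g A u := by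
  simpa using abs_sub_le_leftDeviation hgb (show A ∈ Icc (A - u) A from ⟨by linarith, le_rfl⟩)

lemma exists_leftDeviation_le_mul
    (hgb : ∀ K : Set ℝ, IsCompact K → ∃ M : ℝ, ∀ x ∈ K, |g x| ≤ M) {A : ℝ}
    (hg : (fun x => g x - g A) =O[𝓝 A] fun x => x - A) :
    ∃ c ≥ 0, ∀ u ∈ Ioc (0 : ℝ) 1, leftDeviation g A u ≤ c * u := by
  obtain ⟨K, hK, hKA⟩ := hg.exists_nonneg
  obtain ⟨ε, hε, hball⟩ := Metric.eventually_nhds_iff.1 hKA.bound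
  refine ⟨max K (leftDeviation g A 1 / ε), le_max_of_le_left hK, fun u ⟨hu0, hu1⟩ => ?_⟩
  rcases lt_or_ge u ε with huε | huε
  · have hlip : ∀ ζ ∈ Icc (A - u) A, |g ζ - g A| ≤ K * u := fun ζ ⟨hζl, hζr⟩ => by
      have hdist : |ζ - A| ≤ u := abs_sub_le_iff.2 ⟨by linarith, by linarith⟩
      calc |g ζ - g A| ≤ K * |ζ - A| := by simpa using hball (hdist.trans_lt huε)
        _ ≤ K * u := by gcongr
    calc leftDeviation g A u ≤ K * u :=
          csSup_le ((nonempty_Icc.2 (by linarith)).image _) (forall_mem_image.2 hlip)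
      _ ≤ _ := by gcongr; exact le_max_left _ _
  · have hD1 := leftDeviation_nonneg hgb (A := A) zero_le_one
    calc leftDeviation g A u ≤ leftDeviation g A 1 := leftDeviation_mono hgb hu0.le hu1
      _ ≤ leftDeviation g A 1 / ε * u := by
          rw [div_mul_eq_mul_div, le_div_iff₀ hε]; gcongr
      _ ≤ _ := by gcongr; exact le_max_right _ _

lemma setLIntegral_exp_mul_abs_sub_le
    (hgb : ∀ K : Set ℝ, IsCompact K → ∃ M : ℝ, ∀ x ∈ K, |g x| ≤ M) (Φ A u : ℝ) :
    ∫⁻ z in Ioo 0 u, ENNReal.ofReal (exp (-Φ * z) * |g (z + A - u) - g A|)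
      ≤ (∫⁻ z in Ioo 0 u, ENNReal.ofReal (exp (-Φ * z))) * ENNReal.ofReal (leftDeviation g A u) :=
  setLIntegral_ofReal_mul_le measurableSet_Ioo (fun _ _ => (exp_pos _).le) fun z hz =>
    abs_sub_le_leftDeviation hgb ⟨by linarith [hz.1], by linarith [hz.2]⟩

lemma setLIntegral_exp_mul_abs_sub_le_min_sq
    (hgb : ∀ K : Set ℝ, IsCompact K → ∃ M : ℝ, ∀ x ∈ K, |g x| ≤ M)
    {Φ A c u : ℝ} (hΦ : 0 ≤ Φ) (hc : 0 ≤ c) (hu : u ∈ Ioc 0 1)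
    (hdev : leftDeviation g A u ≤ c * u) :
    ∫⁻ z in Ioo 0 u, ENNReal.ofReal (exp (-Φ * z) * |g (z + A - u) - g A|)
      ≤ ENNReal.ofReal c * ENNReal.ofReal (min 1 (u ^ 2)) := by
  rw [min_eq_right (pow_le_one₀ hu.1.le hu.2), ← ENNReal.ofReal_mul hc]
  calc _ ≤ (∫⁻ z in Ioo 0 u, ENNReal.ofReal (exp (-Φ * z)))
          * ENNReal.ofReal (leftDeviation g A u) := setLIntegral_exp_mul_abs_sub_le hgb Φ A u
    _ ≤ ENNReal.ofReal u * ENNReal.ofReal (c * u) := by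
        gcongr
        exact setLIntegral_Ioo_exp_neg_mul_le hΦ u
    _ = ENNReal.ofReal (c * u ^ 2) := by rw [← ENNReal.ofReal_mul hu.1.le]; ring_nf
end

theorem rho_bar_finite_general
    (ν : Measure ℝ) (Φ A : ℝ) (g : ℝ → ℝ)
    (hν : ∫⁻ z in Set.Ioi (0:ℝ), ENNReal.ofReal (min 1 (z ^ 2)) ∂ν < ⊤)
    (hΦ : 0 < Φ)
    (hgb : ∀ K : Set ℝ, IsCompact K → ∃ M : ℝ, ∀ x ∈ K, |g x| ≤ M)
    (hC1 : ∃ ε > (0:ℝ), ContDiffOn ℝ 2 g (Set.Ioo (A - ε) (A + ε)))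
    (hC2 : ∫⁻ u in Set.Ioi (1:ℝ),
        ENNReal.ofReal (sSup ((fun ζ => |g ζ - g A|) '' Set.Icc (A - u) A)) ∂ν < ⊤) :
    ∫⁻ u in Set.Ioi (0:ℝ),
      (∫⁻ z in Set.Ioo (0:ℝ) u,
        ENNReal.ofReal (Real.exp (-Φ * z) * |g (z + A - u) - g A|)) ∂ν < ⊤ := by
  obtain ⟨ε, hε, hg⟩ := hC1
  have hdiff : DifferentiableAt ℝ g A :=
    (hg.contDiffAt (Ioo_mem_nhds (by linarith) (by linarith))).differentiableAt two_ne_zero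
  obtain ⟨c, hc0, hc⟩ := exists_leftDeviation_le_mul hgb hdiff.hasFDerivAt.isBigO_sub
  set E := ∫⁻ z in Ioi (0:ℝ), ENNReal.ofReal (exp (-Φ * z))
  have hE : E < ⊤ := (exp_neg_integrableOn_Ioi 0 hΦ).lintegral_lt_top
  rw [← Ioc_union_Ioi_eq_Ioi zero_le_one]
  refine (lintegral_union_le _ _ _).trans_lt (ENNReal.add_lt_top.2 ⟨?_, ?_⟩)
  · calc _ ≤ ∫⁻ u in Ioc 0 1, ENNReal.ofReal c * ENNReal.ofReal (min 1 (u ^ 2)) ∂ν :=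
          setLIntegral_mono' measurableSet_Ioc fun u hu =>
            setLIntegral_exp_mul_abs_sub_le_min_sq hgb hΦ.le hc0 hu (hc u hu)
      _ ≤ ENNReal.ofReal c * ∫⁻ u in Ioi (0:ℝ), ENNReal.ofReal (min 1 (u ^ 2)) ∂ν := by
          rw [lintegral_const_mul' _ _ ENNReal.ofReal_ne_top]
          gcongr
          exact Ioc_subset_Ioi_self
      _ < ⊤ := ENNReal.mul_lt_top ENNReal.ofReal_lt_top hν
  · calc _ ≤ ∫⁻ u in Ioi (1:ℝ), E * ENNReal.ofReal (leftDeviation g A u) ∂ν :=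
          lintegral_mono fun u => (setLIntegral_exp_mul_abs_sub_le hgb Φ A u).trans
            (mul_le_mul_left (lintegral_mono_set Ioo_subset_Ioi_self) _)
      _ = E * ∫⁻ u in Ioi (1:ℝ), ENNReal.ofReal (leftDeviation g A u) ∂ν :=
          lintegral_const_mul' _ _ hE.ne
      _ < ⊤ := ENNReal.mul_lt_top hE hC2

/-- Under (C1) `g` is `C²` on an open neighborhood of `A` and
(C2) `∫_{(1,∞)} ν(du) · max_{A−u ≤ ζ ≤ A} |g(ζ) − g(A)| < ∞`, the quantity
`ρ̄_{g,A} = ∫_{(0,∞)} ν(du) ∫_0^u e^{−Φz} |g(z+A−u) − g(A)| dz` is finite. -/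
theorem rho_bar_finite
    (ν : Measure ℝ) (Φ A : ℝ) (g : ℝ → ℝ)
    (hν : ∫⁻ z in Set.Ioi (0:ℝ), ENNReal.ofReal (min 1 (z ^ 2)) ∂ν < ⊤)
    (hΦ : 0 < Φ)
    (hgm : Measurable g)
    (hgb : ∀ K : Set ℝ, IsCompact K → ∃ M : ℝ, ∀ x ∈ K, |g x| ≤ M)
    (hC1 : ∃ ε > (0:ℝ), ContDiffOn ℝ 2 g (Set.Ioo (A - ε) (A + ε)))
    (hC2 : ∫⁻ u in Set.Ioi (1:ℝ),
        ENNReal.ofReal (sSup ((fun ζ => |g ζ - g A|) '' Set.Icc (A - u) A)) ∂ν < ⊤) :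
    ∫⁻ u in Set.Ioi (0:ℝ),
      (∫⁻ z in Set.Ioo (0:ℝ) u,
        ENNReal.ofReal (Real.exp (-Φ * z) * |g (z + A - u) - g A|)) ∂ν < ⊤ :=
  rho_bar_finite_general ν Φ A g hν hΦ hgb hC1 hC2
end

section
/- Fix A ∈ ℝ and x > A. Then the function B ↦ W(x−B) ∫_0^∞ e^{−Φy} h(y+B) dy − ∫_B^x W(x−y) h(y) dy (defined for B < x) is differentiable at B = A, with derivative −Θ(x−A) ∫_0^∞ e^{−Φy} h(y+A) dy, where Θ(y) := W'(y) − Φ W(y). -/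
/-!
Write `∫_0^∞ e^{-Φy} h(y+B) dy = e^{ΦB} J(B)` with `J(B) = ∫_B^∞ e^{-Φu} h(u) du`, and
`K(B) = W(x-B) e^{ΦB}`. Formally `J' = -e^{-ΦB} h(B)`, and the two terms in which `h(B)` appears
cancel, leaving `K'(A) J(A)`. Since `h` need not be continuous, `J` need not be differentiable;
the cancellation survives because the combined integrand `W(x-u) h(u) - K(A) e^{-Φu} h(u)` is a
bounded function times a continuous one vanishing at `u = A`, so its integral over `[A, B]`
is `o(B - A)`.
-/

open MeasureTheory Real Set Filter Topology Asymptotics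

section Integrability

variable {E : Type*} [NormedAddCommGroup E]

theorem MeasureTheory.locallyIntegrable_of_forall_isCompact_norm_le {X : Type*}
    [TopologicalSpace X] [MeasurableSpace X] [OpensMeasurableSpace X] [T2Space X]
    [LocallyCompactSpace X] {μ : Measure X} [IsFiniteMeasureOnCompacts μ] {f : X → E}
    (hf : AEStronglyMeasurable f μ) (hb : ∀ K, IsCompact K → ∃ M, ∀ y ∈ K, ‖f y‖ ≤ M) :
    LocallyIntegrable f μ :=
  locallyIntegrable_iff.2 fun K hK =>
    let ⟨_, hM⟩ := hb K hK
    Measure.integrableOn_of_bounded hK.measure_lt_top.ne hf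
      (ae_restrict_of_forall_mem hK.measurableSet hM)

theorem isBoundedUnder_norm_nhds_of_forall_isCompact_norm_le {X : Type*} [TopologicalSpace X]
    [WeaklyLocallyCompactSpace X] {f : X → E} (hb : ∀ K, IsCompact K → ∃ M, ∀ y ∈ K, ‖f y‖ ≤ M)
    (a : X) : IsBoundedUnder (· ≤ ·) (𝓝 a) (norm ∘ f) :=
  let ⟨K, hK, hKa⟩ := exists_compact_mem_nhds a
  let ⟨_, hM⟩ := hb K hK
  isBoundedUnder_of_eventually_le (eventually_of_mem hKa hM)

theorem MeasureTheory.IntegrableAtFilter.exists_intervalIntegrable {a : ℝ} {μ : Measure ℝ}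
    {f : ℝ → E} (hf : IntegrableAtFilter f (𝓝 a) μ) :
    ∃ ε > 0, IntervalIntegrable f μ (a - ε) (a + ε) := by
  obtain ⟨s, hs, hfs⟩ := hf
  obtain ⟨ε, hε, hεs⟩ := Metric.nhds_basis_closedBall.mem_iff.1 hs
  refine ⟨ε, hε, (hfs.mono_set ?_).intervalIntegrable⟩
  rwa [uIcc_of_le (by linarith), ← Real.closedBall_eq_Icc]

theorem MeasureTheory.IntegrableAtFilter.eventually_intervalIntegrable {a : ℝ} {μ : Measure ℝ}
    {f : ℝ → E} (hf : IntegrableAtFilter f (𝓝 a) μ) :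
    ∀ᶠ b in 𝓝 a, IntervalIntegrable f μ a b := by
  obtain ⟨ε, hε, hfε⟩ := hf.exists_intervalIntegrable
  filter_upwards [Icc_mem_nhds (sub_lt_self a hε) (lt_add_of_pos_right a hε)] with b hb
  exact hfε.mono_set (uIcc_subset_uIcc (Icc_subset_uIcc ⟨by linarith, by linarith⟩)
    (Icc_subset_uIcc hb))

theorem integrableOn_Ioi_comp_add_right_iff {f : ℝ → E} {a d : ℝ} :
    IntegrableOn (fun y => f (y + d)) (Ioi a) ↔ IntegrableOn f (Ioi (a + d)) := by
  have := (measurePreserving_add_right volume d).integrableOn_comp_preimage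
    (measurableEmbedding_addRight d) (f := f) (s := Ioi (a + d))
  rwa [preimage_add_const_Ioi, add_sub_cancel_right] at this

end Integrability

section Primitive

variable {E : Type*} [NormedAddCommGroup E] [NormedSpace ℝ E]

theorem MeasureTheory.IntegrableAtFilter.continuousAt_primitive {a : ℝ} {μ : Measure ℝ}
    [NullSingletonClass μ] {f : ℝ → E} (hf : IntegrableAtFilter f (𝓝 a) μ) :
    ContinuousAt (fun b => ∫ u in a..b, f u ∂μ) a := by
  obtain ⟨ε, hε, hfε⟩ := hf.exists_intervalIntegrable
  have ha : a ∈ uIcc (a - ε) (a + ε) := Icc_subset_uIcc ⟨by linarith, by linarith⟩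
  refine (intervalIntegral.continuousOn_primitive_interval' hfε ha).continuousAt ?_
  rw [uIcc_of_le (by linarith)]
  exact Icc_mem_nhds (sub_lt_self a hε) (lt_add_of_pos_right a hε)

theorem DifferentiableAt.hasDerivAt_smul_of_tendsto_zero {K : ℝ → ℝ} {S : ℝ → E} {a : ℝ}
    (hK : DifferentiableAt ℝ K a) (hKa : K a = 0) (hS : Tendsto S (𝓝 a) (𝓝 0)) :
    HasDerivAt (fun b => K b • S b) 0 a := by
  rw [hasDerivAt_iff_isLittleO]
  simpa [hKa] using hK.isBigO_sub.smul_isLittleO ((isLittleO_one_iff ℝ).2 hS)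

theorem integral_Ioi_comp_add_right (f : ℝ → E) (a d : ℝ) :
    ∫ y in Ioi a, f (y + d) = ∫ u in Ioi (a + d), f u := by
  have := (measurePreserving_add_right volume d).setIntegral_preimage_emb
    (measurableEmbedding_addRight d) f (Ioi (a + d))
  rwa [preimage_add_const_Ioi, add_sub_cancel_right] at this

variable [CompleteSpace E]

/-- `∫_a^b (g - K(a) f) = o(b - a)` by FTC, and `(K(a) - K(b)) ∫_a^b f = O(b - a) · o(1)`. -/
theorem hasDerivAt_integral_sub_smul_integral {f g : ℝ → E} {K : ℝ → ℝ} {a : ℝ}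
    (hK : DifferentiableAt ℝ K a) (hf : IntegrableAtFilter f (𝓝 a))
    (hg : IntegrableAtFilter g (𝓝 a))
    (hlim : Tendsto (fun u => g u - K a • f u) (𝓝 a ⊓ ae volume) (𝓝 0)) :
    HasDerivAt (fun b => (∫ u in a..b, g u) - K b • ∫ u in a..b, f u) 0 a := by
  have hR : HasDerivAt (fun b => ∫ u in a..b, g u - K a • f u) 0 a :=
    intervalIntegral.integral_hasDerivAt_of_tendsto_ae_right .refl
      (let ⟨s, hs, hint⟩ := hg.sub (hf.smul (K a)); ⟨s, hs, hint.aestronglyMeasurable⟩) hlim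
  have hS : HasDerivAt (fun b => (K a - K b) • ∫ u in a..b, f u) 0 a :=
    (differentiableAt_const (K a)).sub hK |>.hasDerivAt_smul_of_tendsto_zero (sub_self _)
      (by simpa using hf.continuousAt_primitive.tendsto)
  refine (add_zero (0 : E) ▸ hR.add hS).congr_of_eventuallyEq ?_
  filter_upwards [hf.eventually_intervalIntegrable, hg.eventually_intervalIntegrable]
    with b hfb hgb
  rw [Pi.add_apply, intervalIntegral.integral_sub (g := fun u => K a • f u) hgb (hfb.smul (K a)),
    intervalIntegral.integral_smul, sub_smul]
  abel

/-- Formally the derivative is `K' • J + (g - K • f)`; the last term need not exist pointwise,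
but it tends to `0` at `a`, which is enough. -/
theorem hasDerivAt_smul_sub_integral {f g J : ℝ → E} {K : ℝ → ℝ} {a c K' : ℝ}
    (hK : HasDerivAt K K' a) (hJ : ∀ᶠ b in 𝓝 a, J b = J a - ∫ u in a..b, f u)
    (hf : IntegrableAtFilter f (𝓝 a)) (hg : IntegrableAtFilter g (𝓝 a))
    (hgc : IntervalIntegrable g volume a c)
    (hlim : Tendsto (fun u => g u - K a • f u) (𝓝 a ⊓ ae volume) (𝓝 0)) :
    HasDerivAt (fun b => K b • J b - ∫ u in b..c, g u) (K' • J a) a := by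
  have hmain := hasDerivAt_integral_sub_smul_integral hK.differentiableAt hf hg hlim
  refine (add_zero (K' • J a) ▸ ((hK.smul_const (J a)).sub_const (∫ u in a..c, g u)).add
    hmain).congr_of_eventuallyEq ?_
  filter_upwards [hJ, hg.eventually_intervalIntegrable] with b hJb hgb
  rw [hJb, Pi.add_apply, ← intervalIntegral.integral_interval_sub_left hgc hgb, smul_sub]
  abel

end Primitive

theorem integral_Ioi_exp_mul_comp_add (Φ B : ℝ) (h : ℝ → ℝ) :
    ∫ y in Ioi 0, exp (-Φ * y) * h (y + B) =
      exp (Φ * B) * ∫ u in Ioi B, exp (-Φ * u) * h u := by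
  have hsplit : ∀ y, exp (-Φ * y) * h (y + B) =
      exp (Φ * B) * (exp (-Φ * (y + B)) * h (y + B)) := fun y => by
    rw [← mul_assoc, ← exp_add]
    ring_nf
  simp_rw [hsplit, integral_const_mul,
    integral_Ioi_comp_add_right (fun u => exp (-Φ * u) * h u), zero_add]

theorem integrableOn_Ioi_exp_mul_of_comp_add {Φ B : ℝ} {h : ℝ → ℝ}
    (hint : IntegrableOn (fun y => exp (-Φ * y) * h (y + B)) (Ioi 0)) :
    IntegrableOn (fun u => exp (-Φ * u) * h u) (Ioi B) := by
  have hsplit : ∀ y, exp (-Φ * (y + B)) * h (y + B) =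
      exp (-Φ * B) * (exp (-Φ * y) * h (y + B)) := fun y => by
    rw [← mul_assoc, ← exp_add]
    ring_nf
  have := IntegrableOn.congr_fun (hint.const_mul (exp (-Φ * B))) (fun y _ => (hsplit y).symm)
    measurableSet_Ioi
  simpa using (integrableOn_Ioi_comp_add_right_iff (f := fun u => exp (-Φ * u) * h u)).1 this

theorem integrableOn_Icc_comp_sub_mul {W h : ℝ → ℝ} (hWc : ContinuousOn W (Ici 0))
    (hh : LocallyIntegrable h) (a x : ℝ) :
    IntegrableOn (fun y => W (x - y) * h y) (Icc a x) :=
  (hh.integrableOn_isCompact isCompact_Icc).continuousOn_mul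
    (hWc.comp (by fun_prop) fun _ hy => mem_Ici.2 (sub_nonneg.2 hy.2)) isCompact_Icc

theorem hasDerivAt_comp_const_sub_mul_exp {W : ℝ → ℝ} {W' Φ x a : ℝ}
    (hW : HasDerivAt W W' (x - a)) :
    HasDerivAt (fun b => W (x - b) * exp (Φ * b)) (-(W' - Φ * W (x - a)) * exp (Φ * a)) a := by
  have hWx : HasDerivAt (fun b => W (x - b)) (W' * -1) a :=
    hW.comp a (by simpa using (hasDerivAt_id a).const_sub x)
  have hexp : HasDerivAt (fun b => exp (Φ * b)) (exp (Φ * a) * Φ) a := by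
    simpa using ((hasDerivAt_id a).const_mul Φ).exp
  exact (hWx.mul hexp).congr_deriv (by ring)

theorem gamma3_hasDerivAt_in_A_general
    (Φ A x : ℝ) (W h : ℝ → ℝ)
    (hWc : ContinuousOn W (Set.Ici 0))
    (hWd : ∀ y ∈ Set.Ioi (0:ℝ), DifferentiableAt ℝ W y)
    (hhm : Measurable h)
    (hhb : ∀ K : Set ℝ, IsCompact K → ∃ M : ℝ, ∀ y ∈ K, |h y| ≤ M)
    (hhint : ∀ B : ℝ, IntegrableOn (fun y => Real.exp (-Φ * y) * h (y + B)) (Set.Ioi 0))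
    (hx : A < x) :
    HasDerivAt
      (fun B => W (x - B) * (∫ y in Set.Ioi (0:ℝ), Real.exp (-Φ * y) * h (y + B)) -
        ∫ y in B..x, W (x - y) * h y)
      (-(deriv W (x - A) - Φ * W (x - A)) *
        ∫ y in Set.Ioi (0:ℝ), Real.exp (-Φ * y) * h (y + A))
      A := by
  set f : ℝ → ℝ := fun u => exp (-Φ * u) * h u
  set K : ℝ → ℝ := fun B => W (x - B) * exp (Φ * B)
  have hh : LocallyIntegrable h :=
    locallyIntegrable_of_forall_isCompact_norm_le hhm.aestronglyMeasurable hhb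
  have hg := integrableOn_Icc_comp_sub_mul hWc hh (A - 1) x
  have hWA := hWd _ (sub_pos.2 hx)
  have hK : HasDerivAt K _ A := hasDerivAt_comp_const_sub_mul_exp hWA.hasDerivAt
  have hJ (B : ℝ) : ∫ u in Ioi B, f u = (∫ u in Ioi A, f u) - ∫ u in A..B, f u := by
    rw [← intervalIntegral.integral_Ioi_sub_Ioi' (integrableOn_Ioi_exp_mul_of_comp_add (hhint A))
      (integrableOn_Ioi_exp_mul_of_comp_add (hhint B)), sub_sub_cancel]
  have hψ : ContinuousAt (fun u => W (x - u) - K A * exp (-Φ * u)) A :=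
    (hWA.continuousAt.comp (by fun_prop)).sub (by fun_prop)
  have hψA : W (x - A) - K A * exp (-Φ * A) = 0 := by
    rw [mul_assoc, ← exp_add, neg_mul, add_neg_cancel, exp_zero, mul_one, sub_self]
  have hlim : Tendsto (fun u => W (x - u) * h u - K A * f u) (𝓝 A) (𝓝 0) :=
    ((hψA ▸ hψ.tendsto).zero_mul_isBoundedUnder_le
      (isBoundedUnder_norm_nhds_of_forall_isCompact_norm_le hhb A)).congr fun u => by ring
  simp_rw [integral_Ioi_exp_mul_comp_add, ← mul_assoc]
  exact (hasDerivAt_smul_sub_integral hK (.of_forall hJ) (hh.continuous_mul (by fun_prop) A)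
    ⟨_, Icc_mem_nhds (by linarith) hx, hg⟩
    (hg.mono_set (uIcc_subset_Icc ⟨by linarith, hx.le⟩ ⟨by linarith, le_rfl⟩)).intervalIntegrable
    (hlim.mono_left inf_le_left)).congr_deriv (by simp only [smul_eq_mul]; ring)

/-- For `x > A`, the function
`B ↦ W(x−B) ∫_0^∞ e^{−Φy} h(y+B) dy − ∫_B^x W(x−y) h(y) dy`
is differentiable at `B = A` with derivative
`−Θ(x−A) ∫_0^∞ e^{−Φy} h(y+A) dy`, where `Θ(y) = W'(y) − Φ W(y)`. -/
theorem gamma3_hasDerivAt_in_A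
    (Φ A x : ℝ) (W h : ℝ → ℝ)
    (hΦ : 0 < Φ)
    (hW0 : ∀ y < (0:ℝ), W y = 0)
    (hWc : ContinuousOn W (Set.Ici 0))
    (hWd : ∀ y ∈ Set.Ioi (0:ℝ), DifferentiableAt ℝ W y)
    (hWd' : ContinuousOn (deriv W) (Set.Ioi 0))
    (hhm : Measurable h)
    (hhb : ∀ K : Set ℝ, IsCompact K → ∃ M : ℝ, ∀ y ∈ K, |h y| ≤ M)
    (hhint : ∀ B : ℝ, IntegrableOn (fun y => Real.exp (-Φ * y) * h (y + B)) (Set.Ioi 0))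
    (hx : A < x) :
    HasDerivAt
      (fun B => W (x - B) * (∫ y in Set.Ioi (0:ℝ), Real.exp (-Φ * y) * h (y + B)) -
        ∫ y in B..x, W (x - y) * h y)
      (-(deriv W (x - A) - Φ * W (x - A)) *
        ∫ y in Set.Ioi (0:ℝ), Real.exp (-Φ * y) * h (y + A))
      A :=
  gamma3_hasDerivAt_in_A_general Φ A x W h hWc hWd hhm hhb hhint hx
end

section
/- Fix A ∈ ℝ and assume: (C1) g is C² on an open neighborhood of A; (C2) ∫_{(1,∞)} Π(du) · max_{A−u ≤ ζ ≤ A} |g(ζ) − g(A)| < ∞. Then lim_{x↓A} φ_{g,A}(x) = 0. -/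
/-!
The inner integral over `z ∈ [0, min u (x - A)]` is at most `sup_{[0,1]} |W|` times the
oscillation `S u` of `g` on `[A - u, A]` times `min u (x - A)`, which tends to `0` as `x ↓ A`.
For dominated convergence take `S u * min u 1`: since `g` is Lipschitz near `A`, `S u = O(u)`,
so on `(0, 1]` this is `O(u ^ 2)` and is integrated by the Lévy condition, while on `(1, ∞)` it
is `S u`, integrable by (C2).
-/

open MeasureTheory Real Set Filter
open scoped Topology

noncomputable def leftOscillation (g : ℝ → ℝ) (A u : ℝ) : ℝ :=
  sSup ((fun ζ => |g ζ - g A|) '' Icc (A - u) A)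

section leftOscillation

variable {g : ℝ → ℝ} {A u : ℝ}

lemma bddAbove_leftOscillation_image
    (hgb : ∀ K : Set ℝ, IsCompact K → ∃ M : ℝ, ∀ y ∈ K, |g y| ≤ M) (u : ℝ) :
    BddAbove ((fun ζ => |g ζ - g A|) '' Icc (A - u) A) := by
  obtain ⟨M, hM⟩ := hgb (Icc (A - u) A) isCompact_Icc
  refine ⟨M + |g A|, ?_⟩
  rintro _ ⟨ζ, hζ, rfl⟩
  linarith [abs_sub (g ζ) (g A), hM ζ hζ]

lemma abs_sub_le_leftOscillation
    (hgb : ∀ K : Set ℝ, IsCompact K → ∃ M : ℝ, ∀ y ∈ K, |g y| ≤ M) {ζ : ℝ}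
    (hζ : ζ ∈ Icc (A - u) A) : |g ζ - g A| ≤ leftOscillation g A u :=
  le_csSup (bddAbove_leftOscillation_image hgb u) (mem_image_of_mem _ hζ)

lemma leftOscillation_nonneg
    (hgb : ∀ K : Set ℝ, IsCompact K → ∃ M : ℝ, ∀ y ∈ K, |g y| ≤ M) (hu : 0 ≤ u) :
    0 ≤ leftOscillation g A u := by
  simpa using abs_sub_le_leftOscillation hgb (ζ := A) ⟨by linarith, le_rfl⟩

lemma leftOscillation_of_neg (hu : u < 0) : leftOscillation g A u = 0 := by
  simp [leftOscillation, Icc_eq_empty (by linarith : ¬A - u ≤ A)]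

lemma monotone_leftOscillation
    (hgb : ∀ K : Set ℝ, IsCompact K → ∃ M : ℝ, ∀ y ∈ K, |g y| ≤ M) :
    Monotone (leftOscillation g A) := by
  intro u v huv
  rcases lt_or_ge u 0 with hu | hu
  · rw [leftOscillation_of_neg hu]
    rcases lt_or_ge v 0 with hv | hv
    · rw [leftOscillation_of_neg hv]
    · exact leftOscillation_nonneg hgb hv
  · exact csSup_le_csSup (bddAbove_leftOscillation_image hgb v)
      (Nonempty.image _ ⟨A, by linarith, le_rfl⟩)
      (image_mono (Icc_subset_Icc (by linarith) le_rfl))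

lemma leftOscillation_le_mul {K : NNReal} (hK : LipschitzOnWith K g (Icc (A - u) A))
    (hu : 0 ≤ u) : leftOscillation g A u ≤ K * u := by
  have hA : A ∈ Icc (A - u) A := ⟨by linarith, le_rfl⟩
  refine csSup_le (Nonempty.image _ ⟨A, hA⟩) ?_
  rintro _ ⟨ζ, hζ, rfl⟩
  calc |g ζ - g A| = dist (g ζ) (g A) := (Real.dist_eq _ _).symm
    _ ≤ K * dist ζ A := hK.dist_le_mul ζ hζ A hA
    _ ≤ K * u := by
        gcongr
        rw [Real.dist_eq, abs_le]
        constructor <;> linarith [hζ.1, hζ.2]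

lemma exists_leftOscillation_mul_le_sq
    (hgb : ∀ K : Set ℝ, IsCompact K → ∃ M : ℝ, ∀ y ∈ K, |g y| ≤ M) {K : NNReal} {ε : ℝ}
    (hε : 0 < ε) (hK : LipschitzOnWith K g (Icc (A - ε) A)) :
    ∃ c, ∀ u ∈ Ioc (0:ℝ) 1, leftOscillation g A u * u ≤ c * u ^ 2 := by
  refine ⟨max K (leftOscillation g A 1 / ε ^ 2), fun u ⟨hu0, hu1⟩ => ?_⟩
  rcases le_or_gt u ε with huε | huε
  · calc leftOscillation g A u * u ≤ K * u * u := by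
          gcongr
          exact leftOscillation_le_mul (hK.mono (Icc_subset_Icc (by linarith) le_rfl)) hu0.le
      _ ≤ _ := by nlinarith [le_max_left (K : ℝ) (leftOscillation g A 1 / ε ^ 2)]
  · have h1 : leftOscillation g A 1 ≤ leftOscillation g A 1 / ε ^ 2 * u ^ 2 := by
      rw [div_mul_eq_mul_div, le_div_iff₀ (by positivity)]
      exact mul_le_mul_of_nonneg_left (by nlinarith) (leftOscillation_nonneg hgb zero_le_one)
    calc leftOscillation g A u * u ≤ leftOscillation g A 1 * 1 := by
          gcongr
          exacts [leftOscillation_nonneg hgb zero_le_one, monotone_leftOscillation hgb hu1]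
      _ ≤ _ := by nlinarith [le_max_right (K : ℝ) (leftOscillation g A 1 / ε ^ 2)]

end leftOscillation

lemma ContDiffAt.exists_lipschitzOnWith_Icc_left {g : ℝ → ℝ} {A : ℝ} (hg : ContDiffAt ℝ 1 g A) :
    ∃ (K : NNReal) (ε : ℝ), 0 < ε ∧ LipschitzOnWith K g (Icc (A - ε) A) := by
  obtain ⟨K, t, ht, hK⟩ := hg.exists_lipschitzOnWith
  obtain ⟨l, hl, hlt⟩ := mem_nhdsLE_iff_exists_Icc_subset.1 (mem_nhdsWithin_of_mem_nhds ht)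
  exact ⟨K, A - l, by linarith, hK.mono (by rwa [sub_sub_cancel])⟩

lemma integrable_restrict_Ioi_of_le_sq {ν : Measure ℝ} {f h : ℝ → ℝ} {c : ℝ}
    (hν : ∫⁻ z in Ioi (0:ℝ), ENNReal.ofReal (min 1 (z ^ 2)) ∂ν < ⊤)
    (hf : AEStronglyMeasurable f (ν.restrict (Ioi 0)))
    (h_small : ∀ u ∈ Ioc (0:ℝ) 1, |f u| ≤ c * u ^ 2)
    (h_large : ∀ u ∈ Ioi (1:ℝ), |f u| ≤ h u)
    (hh : ∫⁻ u in Ioi (1:ℝ), ENNReal.ofReal (h u) ∂ν < ⊤) :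
    Integrable f (ν.restrict (Ioi 0)) := by
  refine ⟨hf, (hasFiniteIntegral_iff_norm f).2 ?_⟩
  have hpt : ∀ u ∈ Ioi (0:ℝ), ENNReal.ofReal ‖f u‖ ≤ ENNReal.ofReal c *
      ENNReal.ofReal (min 1 (u ^ 2)) + (Ioi 1).indicator (fun u => ENNReal.ofReal (h u)) u := by
    intro u hu
    rw [Real.norm_eq_abs]
    rcases le_or_gt u 1 with hu1 | hu1
    · refine le_add_right ?_
      rw [← ENNReal.ofReal_mul' (by positivity), min_eq_right (by nlinarith [mem_Ioi.1 hu])]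
      exact ENNReal.ofReal_le_ofReal (h_small u ⟨hu, hu1⟩)
    · refine le_add_left ?_
      rw [indicator_of_mem (mem_Ioi.2 hu1)]
      exact ENNReal.ofReal_le_ofReal (h_large u hu1)
  calc ∫⁻ u in Ioi 0, ENNReal.ofReal ‖f u‖ ∂ν
      ≤ ∫⁻ u in Ioi 0, ENNReal.ofReal c * ENNReal.ofReal (min 1 (u ^ 2)) +
          (Ioi 1).indicator (fun u => ENNReal.ofReal (h u)) u ∂ν :=
        setLIntegral_mono' measurableSet_Ioi hpt
    _ = ENNReal.ofReal c * ∫⁻ u in Ioi 0, ENNReal.ofReal (min 1 (u ^ 2)) ∂ν +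
          ∫⁻ u in Ioi 0, (Ioi 1).indicator (fun u => ENNReal.ofReal (h u)) u ∂ν := by
        rw [lintegral_add_left (by fun_prop), lintegral_const_mul' _ _ ENNReal.ofReal_ne_top]
    _ ≤ ENNReal.ofReal c * ∫⁻ u in Ioi 0, ENNReal.ofReal (min 1 (u ^ 2)) ∂ν +
          ∫⁻ u in Ioi 1, ENNReal.ofReal (h u) ∂ν :=
      add_le_add le_rfl <| (setLIntegral_le_lintegral _ _).trans_eq
        (lintegral_indicator measurableSet_Ioi _)
    _ < ⊤ := ENNReal.add_lt_top.2 ⟨ENNReal.mul_lt_top ENNReal.ofReal_lt_top hν, hh⟩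

lemma stronglyMeasurable_integral_Ioc_prod {μ : Measure ℝ} [SFinite μ] {F : ℝ × ℝ → ℝ}
    {a b : ℝ → ℝ} (hF : Measurable F) (ha : Measurable a) (hb : Measurable b) :
    StronglyMeasurable fun u => ∫ z in Ioc (a u) (b u), F (u, z) ∂μ := by
  have hs : MeasurableSet {p : ℝ × ℝ | p.2 ∈ Ioc (a p.1) (b p.1)} :=
    (measurableSet_lt (ha.comp measurable_fst) measurable_snd).inter
      (measurableSet_le measurable_snd (hb.comp measurable_fst))
  convert (hF.indicator hs).stronglyMeasurable.integral_prod_right' (ν := μ) using 2 with u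
  rw [← integral_indicator measurableSet_Ioc]
  rfl

lemma stronglyMeasurable_intervalIntegral_prod {μ : Measure ℝ} [SFinite μ] {F : ℝ × ℝ → ℝ}
    {a b : ℝ → ℝ} (hF : Measurable F) (ha : Measurable a) (hb : Measurable b) :
    StronglyMeasurable fun u => ∫ z in a u..b u, F (u, z) ∂μ :=
  (stronglyMeasurable_integral_Ioc_prod hF ha hb).sub
    (stronglyMeasurable_integral_Ioc_prod hF hb ha)

lemma measurable_of_monotoneOn_Ici {W : ℝ → ℝ} (hW0 : ∀ y < (0:ℝ), W y = 0)
    (hWm : MonotoneOn W (Ici 0)) : Measurable W := by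
  have hmono : Monotone fun y => W (max y 0) := fun y y' h =>
    hWm (mem_Ici.2 (le_max_right _ _)) (mem_Ici.2 (le_max_right _ _)) (max_le_max h le_rfl)
  convert hmono.measurable.indicator (measurableSet_Ici (a := (0:ℝ))) using 1
  ext y
  rcases lt_or_ge y 0 with hy | hy
  · rw [hW0 y hy, indicator_of_notMem (by simpa using hy)]
  · rw [indicator_of_mem (mem_Ici.2 hy), max_eq_left hy]

lemma abs_le_max_abs_of_monotoneOn {W : ℝ → ℝ} {a b y : ℝ} (hW : MonotoneOn W (Icc a b))
    (hy : y ∈ Icc a b) : |W y| ≤ max |W a| |W b| :=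
  have hab : a ≤ b := hy.1.trans hy.2
  abs_le_max_abs_abs (hW ⟨le_rfl, hab⟩ hy hy.1) (hW hy ⟨hab, le_rfl⟩ hy.2)

noncomputable def phiIntegrand (g W : ℝ → ℝ) (A x u : ℝ) : ℝ :=
  ∫ z in (0:ℝ)..(min u (x - A)), W (x - z - A) * (g (z + A - u) - g A)

section phi

variable {g : ℝ → ℝ} {A : ℝ}

lemma integrable_leftOscillation_mul_min {ν : Measure ℝ}
    (hν : ∫⁻ z in Ioi (0:ℝ), ENNReal.ofReal (min 1 (z ^ 2)) ∂ν < ⊤)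
    (hgb : ∀ K : Set ℝ, IsCompact K → ∃ M : ℝ, ∀ y ∈ K, |g y| ≤ M)
    (hg : ContDiffAt ℝ 1 g A)
    (hC2 : ∫⁻ u in Ioi (1:ℝ), ENNReal.ofReal (leftOscillation g A u) ∂ν < ⊤) :
    Integrable (fun u => leftOscillation g A u * min u 1) (ν.restrict (Ioi 0)) := by
  obtain ⟨K, ε, hε, hK⟩ := hg.exists_lipschitzOnWith_Icc_left
  obtain ⟨c, hc⟩ := exists_leftOscillation_mul_le_sq hgb hε hK
  have hS := monotone_leftOscillation hgb (A := A)
  refine integrable_restrict_Ioi_of_le_sq (c := c) hν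
    (hS.measurable.mul (measurable_id.min measurable_const)).aestronglyMeasurable
    (fun u hu => ?_) (fun u hu => ?_) hC2
  · rw [min_eq_left hu.2, abs_of_nonneg (mul_nonneg (leftOscillation_nonneg hgb hu.1.le) hu.1.le)]
    exact hc u hu
  · rw [min_eq_right (le_of_lt hu), mul_one,
      abs_of_nonneg (leftOscillation_nonneg hgb (zero_le_one.trans (le_of_lt hu)))]

lemma norm_phiIntegrand_le
    (hgb : ∀ K : Set ℝ, IsCompact K → ∃ M : ℝ, ∀ y ∈ K, |g y| ≤ M) {W : ℝ → ℝ} {M x u : ℝ}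
    (hW : ∀ y ∈ Icc (0:ℝ) 1, |W y| ≤ M) (hx : x ∈ Ioc A (A + 1)) (hu : 0 < u) :
    ‖phiIntegrand g W A x u‖ ≤ M * leftOscillation g A u * min u (x - A) := by
  have hm : 0 ≤ min u (x - A) := le_min hu.le (by linarith [hx.1])
  have hM : 0 ≤ M := (abs_nonneg _).trans (hW 0 ⟨le_rfl, zero_le_one⟩)
  have hpt : ∀ z ∈ uIoc 0 (min u (x - A)),
      ‖W (x - z - A) * (g (z + A - u) - g A)‖ ≤ M * leftOscillation g A u := by
    intro z hz
    rw [uIoc_of_le hm] at hz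
    have hzu : z ≤ u := hz.2.trans (min_le_left _ _)
    have hzx : z ≤ x - A := hz.2.trans (min_le_right _ _)
    rw [Real.norm_eq_abs, abs_mul]
    exact mul_le_mul (hW _ ⟨by linarith, by linarith [hx.2, hz.1]⟩)
      (abs_sub_le_leftOscillation hgb ⟨by linarith [hz.1], by linarith⟩) (abs_nonneg _) hM
  simpa [phiIntegrand, abs_of_nonneg hm] using
    intervalIntegral.norm_integral_le_of_norm_le_const hpt

lemma tendsto_phiIntegrand_nhdsGT
    (hgb : ∀ K : Set ℝ, IsCompact K → ∃ M : ℝ, ∀ y ∈ K, |g y| ≤ M) {W : ℝ → ℝ} {M u : ℝ}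
    (hW : ∀ y ∈ Icc (0:ℝ) 1, |W y| ≤ M) (hu : 0 < u) :
    Tendsto (fun x => phiIntegrand g W A x u) (𝓝[>] A) (𝓝 0) := by
  have hM : 0 ≤ M * leftOscillation g A u :=
    mul_nonneg ((abs_nonneg _).trans (hW 0 ⟨le_rfl, zero_le_one⟩))
      (leftOscillation_nonneg hgb hu.le)
  refine squeeze_zero_norm' (a := fun x => M * leftOscillation g A u * (x - A)) ?_ ?_
  · filter_upwards [Ioo_mem_nhdsGT (lt_add_one A)] with x hx
    exact (norm_phiIntegrand_le hgb hW (Ioo_subset_Ioc_self hx) hu).trans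
      (mul_le_mul_of_nonneg_left (min_le_right _ _) hM)
  · exact tendsto_nhdsWithin_of_tendsto_nhds
      (by simpa using ((tendsto_id (x := 𝓝 A)).sub_const A).const_mul (M * leftOscillation g A u))

lemma aestronglyMeasurable_phiIntegrand (hgm : Measurable g) {W : ℝ → ℝ}
    (hW0 : ∀ y < (0:ℝ), W y = 0) (hWm : MonotoneOn W (Ici 0)) (ν : Measure ℝ) (x : ℝ) :
    AEStronglyMeasurable (phiIntegrand g W A x) ν :=
  have hW := measurable_of_monotoneOn_Ici hW0 hWm
  (stronglyMeasurable_intervalIntegral_prod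
    (F := fun p => W (x - p.2 - A) * (g (p.2 + A - p.1) - g A)) (by fun_prop) measurable_const
    (measurable_id.min measurable_const)).aestronglyMeasurable

end phi

theorem phi_tendsto_zero_general
    (ν : Measure ℝ) (A : ℝ) (g W : ℝ → ℝ)
    (hν : ∫⁻ z in Set.Ioi (0:ℝ), ENNReal.ofReal (min 1 (z ^ 2)) ∂ν < ⊤)
    (hgm : Measurable g)
    (hgb : ∀ K : Set ℝ, IsCompact K → ∃ M : ℝ, ∀ y ∈ K, |g y| ≤ M)
    (hW0 : ∀ y < (0:ℝ), W y = 0)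
    (hWm : MonotoneOn W (Set.Ici 0))
    (hC1 : ∃ ε > (0:ℝ), ContDiffOn ℝ 2 g (Set.Ioo (A - ε) (A + ε)))
    (hC2 : ∫⁻ u in Set.Ioi (1:ℝ),
        ENNReal.ofReal (sSup ((fun ζ => |g ζ - g A|) '' Set.Icc (A - u) A)) ∂ν < ⊤) :
    Filter.Tendsto
      (fun x => ∫ u in Set.Ioi (0:ℝ),
        (∫ z in (0:ℝ)..(min u (x - A)), W (x - z - A) * (g (z + A - u) - g A)) ∂ν)
      (nhdsWithin A (Set.Ioi A)) (nhds 0) := by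
  obtain ⟨ε, hε, hg⟩ := hC1
  have hg1 : ContDiffAt ℝ 1 g A :=
    (hg.contDiffAt (Ioo_mem_nhds (by linarith) (by linarith))).of_le (by norm_num)
  set M := max |W 0| |W 1|
  have hWM : ∀ y ∈ Icc (0:ℝ) 1, |W y| ≤ M := fun y hy =>
    abs_le_max_abs_of_monotoneOn (hWm.mono Icc_subset_Ici_self) hy
  have hMS : ∀ u ∈ Ioi (0:ℝ), 0 ≤ M * leftOscillation g A u := fun u hu =>
    mul_nonneg ((abs_nonneg _).trans (le_max_left _ _)) (leftOscillation_nonneg hgb (le_of_lt hu))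
  have hdom : ∀ᶠ x in 𝓝[>] A, ∀ᵐ u ∂ν.restrict (Ioi 0),
      ‖phiIntegrand g W A x u‖ ≤ M * leftOscillation g A u * min u 1 := by
    filter_upwards [Ioo_mem_nhdsGT (lt_add_one A)] with x hx
    refine ae_restrict_of_forall_mem measurableSet_Ioi fun u hu => ?_
    exact (norm_phiIntegrand_le hgb hWM (Ioo_subset_Ioc_self hx) hu).trans
      (mul_le_mul_of_nonneg_left (min_le_min le_rfl (by linarith [hx.2])) (hMS u hu))
  change Tendsto (fun x => ∫ u in Ioi 0, phiIntegrand g W A x u ∂ν) _ _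
  simpa using tendsto_integral_filter_of_dominated_convergence _
    (Eventually.of_forall (aestronglyMeasurable_phiIntegrand hgm hW0 hWm _)) hdom
    (by simpa only [mul_assoc] using
      (integrable_leftOscillation_mul_min hν hgb hg1 hC2).const_mul M)
    (ae_restrict_of_forall_mem measurableSet_Ioi fun u => tendsto_phiIntegrand_nhdsGT hgb hWM)

/-- under (C1)-(C2),
`φ_{g,A}(x) = ∫_{(0,∞)} ν(du) ∫_0^{min(u,x−A)} W(x−z−A)(g(z+A−u) − g(A)) dz → 0`
as `x ↓ A`. -/
theorem phi_tendsto_zero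
    (ν : Measure ℝ) (Φ A C : ℝ) (g W : ℝ → ℝ)
    (hν : ∫⁻ z in Set.Ioi (0:ℝ), ENNReal.ofReal (min 1 (z ^ 2)) ∂ν < ⊤)
    (hΦ : 0 < Φ)
    (hgm : Measurable g)
    (hgb : ∀ K : Set ℝ, IsCompact K → ∃ M : ℝ, ∀ y ∈ K, |g y| ≤ M)
    (hW0 : ∀ y < (0:ℝ), W y = 0)
    (hWc : ContinuousOn W (Set.Ici 0))
    (hWm : MonotoneOn W (Set.Ici 0))
    (hWΦm : MonotoneOn (fun y => Real.exp (-Φ * y) * W y) (Set.Ici 0))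
    (hWΦb : ∀ y ∈ Set.Ici (0:ℝ), Real.exp (-Φ * y) * W y ≤ C)
    (hC1 : ∃ ε > (0:ℝ), ContDiffOn ℝ 2 g (Set.Ioo (A - ε) (A + ε)))
    (hC2 : ∫⁻ u in Set.Ioi (1:ℝ),
        ENNReal.ofReal (sSup ((fun ζ => |g ζ - g A|) '' Set.Icc (A - u) A)) ∂ν < ⊤) :
    Filter.Tendsto
      (fun x => ∫ u in Set.Ioi (0:ℝ),
        (∫ z in (0:ℝ)..(min u (x - A)), W (x - z - A) * (g (z + A - u) - g A)) ∂ν)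
      (nhdsWithin A (Set.Ioi A)) (nhds 0) :=
  phi_tendsto_zero_general ν A g W hν hgm hgb hW0 hWm hC1 hC2
end

section
/- Fix A ∈ ℝ and assume: (C1) g is C² on an open neighborhood of A; (C2) ∫_{(1,∞)} Π(du) · max_{A−u ≤ ζ ≤ A} |g(ζ) − g(A)| < ∞. Then lim_{x↓A} U_A(x) = g(A) + W(0)·Ψ(A). Consequently, if W(0) > 0 then the continuous-fit condition lim_{x↓A} U_A(x) = g(A) holds if and only if Ψ(A) = 0, while if W(0) = 0 it holds automatically. -/
/-
As `x ↓ A`, `W(x - A) → W(0)` by continuity of `W` at `0⁺`, `Z(x - A) → 1`, and the convolution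
term `∫_A^x W(x - y) h(y) dy` vanishes with the length of its interval. The only delicate term is
`φ_{g,A}`: its inner integral is at most `sup_{[0,1]} |W| · min(u, x - A) · osc(u)`, where `osc(u)`
is the oscillation of `g` on `[A - u, A]`. As `g` is Lipschitz near `A`, `osc(u) = O(u)` for small
`u`, so `min(u, 1) · osc(u)` is `Π`-integrable, by the Lévy condition on `(0, 1]` and by (C2) on
`(1, ∞)`, and dominated convergence gives `φ_{g,A}(x) → 0`.
-/

open MeasureTheory Real Set Filter

/-- `Z(x) = 1 + q ∫_0^{max(x,0)} W(y) dy`. -/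
noncomputable def Zfun (q : ℝ) (W : ℝ → ℝ) (x : ℝ) : ℝ :=
  1 + q * ∫ y in (0:ℝ)..(max x 0), W y

/-- `ρ_{g,B} = ∫_{(0,∞)} ν(du) ∫_0^u e^{−Φz}(g(z+B−u) − g(B)) dz`. -/
noncomputable def rhoFun (ν : Measure ℝ) (Φ : ℝ) (g : ℝ → ℝ) (B : ℝ) : ℝ :=
  ∫ u in Set.Ioi (0:ℝ), (∫ z in (0:ℝ)..u, Real.exp (-Φ * z) * (g (z + B - u) - g B)) ∂ν

/-- `φ_{g,B}(x) = ∫_{(0,∞)} ν(du) ∫_0^{min(u,x−B)} W(x−z−B)(g(z+B−u) − g(B)) dz`. -/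
noncomputable def phiFun (ν : Measure ℝ) (W g : ℝ → ℝ) (B x : ℝ) : ℝ :=
  ∫ u in Set.Ioi (0:ℝ),
    (∫ z in (0:ℝ)..(min u (x - B)), W (x - z - B) * (g (z + B - u) - g B)) ∂ν

/-- `∫_0^∞ e^{−Φy} h(y+B) dy`. -/
noncomputable def hInt (Φ : ℝ) (h : ℝ → ℝ) (B : ℝ) : ℝ :=
  ∫ y in Set.Ioi (0:ℝ), Real.exp (-Φ * y) * h (y + B)

/-- `Ψ(B) = −(q/Φ) g(B) + ρ_{g,B} + ∫_0^∞ e^{−Φy} h(y+B) dy`. -/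
noncomputable def PsiFun (q Φ : ℝ) (ν : Measure ℝ) (g h : ℝ → ℝ) (B : ℝ) : ℝ :=
  -(q / Φ) * g B + rhoFun ν Φ g B + hInt Φ h B

/-- Expected discounted payoff of the threshold strategy at level `B`, for `x > B`. -/
noncomputable def Ufun (q Φ : ℝ) (ν : Measure ℝ) (W g h : ℝ → ℝ) (B x : ℝ) : ℝ :=
  g B * (Zfun q W (x - B) - q / Φ * W (x - B)) + W (x - B) * rhoFun ν Φ g B -
    phiFun ν W g B x + W (x - B) * hInt Φ h B - ∫ y in B..x, W (x - y) * h y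

open Topology

lemma tendsto_sub_nhdsGT (a : ℝ) : Tendsto (fun x => x - a) (𝓝[>] a) (𝓝[>] 0) := by
  refine tendsto_nhdsWithin_iff.2
    ⟨?_, eventually_nhdsWithin_of_forall fun x hx => mem_Ioi.2 (sub_pos.2 hx)⟩
  simpa using ((continuous_sub_right a).tendsto a).mono_left nhdsWithin_le_nhds

lemma tendsto_intervalIntegral_nhdsGT_of_norm_le {E : Type*} [NormedAddCommGroup E]
    [NormedSpace ℝ E] {F : ℝ → ℝ → E} {a M : ℝ}
    (hF : ∀ᶠ x in 𝓝[>] a, ∀ y ∈ Ioc a x, ‖F x y‖ ≤ M) :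
    Tendsto (fun x => ∫ y in a..x, F x y) (𝓝[>] a) (𝓝 0) := by
  have hlin : Tendsto (fun x => M * (x - a)) (𝓝[>] a) (𝓝 0) := by
    simpa using ((tendsto_sub_nhdsGT a).mono_right nhdsWithin_le_nhds).const_mul M
  refine squeeze_zero_norm' ?_ hlin
  filter_upwards [hF, self_mem_nhdsWithin] with x hx hxa
  have hax : a ≤ x := le_of_lt hxa
  rw [← abs_of_nonneg (sub_nonneg.2 hax)]
  exact intervalIntegral.norm_integral_le_of_norm_le_const (by rwa [uIoc_of_le hax])

/-- Far from `a`, the bound `M` is absorbed into the constant since `dist x a` is bounded below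
there. -/
lemma exists_dist_le_mul_dist_of_contDiffAt {E F : Type*} [NormedAddCommGroup E]
    [NormedSpace ℝ E] [NormedAddCommGroup F] [NormedSpace ℝ F] {g : E → F} {a : E} {s : Set E}
    {M : ℝ} (hg : ContDiffAt ℝ 1 g a) (hM : ∀ x ∈ s, dist (g x) (g a) ≤ M) :
    ∃ L, 0 ≤ L ∧ ∀ x ∈ s, dist (g x) (g a) ≤ L * dist x a := by
  obtain ⟨K, t, ht, hK⟩ := hg.exists_lipschitzOnWith
  obtain ⟨δ, hδ, hball⟩ := Metric.mem_nhds_iff.1 ht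
  refine ⟨K + max M 0 / δ, by positivity, fun x hx => ?_⟩
  by_cases hxa : dist x a < δ
  · calc dist (g x) (g a) ≤ K * dist x a :=
          hK.dist_le_mul x (hball hxa) a (hball (Metric.mem_ball_self hδ))
      _ ≤ (K + max M 0 / δ) * dist x a := by gcongr; exact le_add_of_nonneg_right (by positivity)
  · push Not at hxa
    calc dist (g x) (g a) ≤ max M 0 / δ * δ := by
          rw [div_mul_cancel₀ _ hδ.ne']; exact (hM x hx).trans (le_max_left _ _)
      _ ≤ (K + max M 0 / δ) * dist x a := by
          gcongr; exact le_add_of_nonneg_left K.coe_nonneg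

/-- The oscillation `max_{a - u ≤ ζ ≤ a} |g ζ - g a|` of condition (C2); it is `0` for `u < 0`. -/
noncomputable def leftOsc (g : ℝ → ℝ) (a u : ℝ) : ℝ :=
  sSup ((fun ζ => |g ζ - g a|) '' Icc (a - u) a)

section leftOsc

variable {g : ℝ → ℝ} {a : ℝ}

lemma leftOsc_nonneg (u : ℝ) : 0 ≤ leftOsc g a u :=
  Real.sSup_nonneg (by rintro _ ⟨ζ, -, rfl⟩; exact abs_nonneg _)

lemma abs_sub_le_leftOsc (hg : ∀ K : Set ℝ, IsCompact K → ∃ M : ℝ, ∀ y ∈ K, |g y| ≤ M) {u ζ : ℝ}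
    (hζ : ζ ∈ Icc (a - u) a) : |g ζ - g a| ≤ leftOsc g a u := by
  obtain ⟨M, hM⟩ := hg (Icc (a - u) a) isCompact_Icc
  refine le_csSup ⟨M + |g a|, ?_⟩ ⟨ζ, hζ, rfl⟩
  rintro _ ⟨η, hη, rfl⟩
  exact (abs_sub _ _).trans (by linarith [hM η hη])

lemma monotone_leftOsc (hg : ∀ K : Set ℝ, IsCompact K → ∃ M : ℝ, ∀ y ∈ K, |g y| ≤ M) :
    Monotone (leftOsc g a) := fun _ v huv =>
  Real.sSup_le (by
    rintro _ ⟨ζ, hζ, rfl⟩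
    exact abs_sub_le_leftOsc hg ⟨by linarith [hζ.1], hζ.2⟩) (leftOsc_nonneg v)

lemma exists_leftOsc_le_mul (hg : ∀ K : Set ℝ, IsCompact K → ∃ M : ℝ, ∀ y ∈ K, |g y| ≤ M)
    (h1 : ContDiffAt ℝ 1 g a) :
    ∃ L, 0 ≤ L ∧ ∀ u ∈ Icc (0 : ℝ) 1, leftOsc g a u ≤ L * u := by
  obtain ⟨L, hL, hLip⟩ := exists_dist_le_mul_dist_of_contDiffAt (s := Icc (a - 1) a) h1
    fun ζ hζ => abs_sub_le_leftOsc hg hζ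
  refine ⟨L, hL, fun u hu => Real.sSup_le ?_ (mul_nonneg hL hu.1)⟩
  rintro _ ⟨ζ, hζ, rfl⟩
  have hζa : |ζ - a| ≤ u := abs_le.2 ⟨by linarith [hζ.1], by linarith [hζ.2, hu.1]⟩
  calc |g ζ - g a| ≤ L * |ζ - a| := hLip ζ ⟨by linarith [hζ.1, hu.2], hζ.2⟩
    _ ≤ L * u := by gcongr

end leftOsc

section minMul

lemma norm_min_mul_le_norm_min_one_mul {u s : ℝ} (hu : 0 ≤ u) (hs₀ : 0 ≤ s) (hs₁ : s ≤ 1)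
    (c : ℝ) : ‖min u s * c‖ ≤ ‖min u 1 * c‖ := by
  rw [norm_mul, norm_mul, Real.norm_of_nonneg (le_min hu hs₀),
    Real.norm_of_nonneg (le_min hu zero_le_one)]
  gcongr

variable {μ : Measure ℝ} {G : ℝ → ℝ}

lemma integrableOn_min_mul (hG : AEStronglyMeasurable G (μ.restrict (Ioi 0)))
    (hint : IntegrableOn (fun u => min u 1 * G u) (Ioi 0) μ) {s : ℝ} (hs₀ : 0 ≤ s)
    (hs₁ : s ≤ 1) : IntegrableOn (fun u => min u s * G u) (Ioi 0) μ := by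
  refine Integrable.mono hint
    ((by fun_prop : Measurable fun u : ℝ => min u s).aestronglyMeasurable.mul hG) ?_
  filter_upwards [ae_restrict_mem measurableSet_Ioi] with u hu
  exact norm_min_mul_le_norm_min_one_mul (le_of_lt hu) hs₀ hs₁ (G u)

lemma tendsto_setIntegral_min_mul_nhdsGT_zero (hG : AEStronglyMeasurable G (μ.restrict (Ioi 0)))
    (hint : IntegrableOn (fun u => min u 1 * G u) (Ioi 0) μ) :
    Tendsto (fun s => ∫ u in Ioi 0, min u s * G u ∂μ) (𝓝[>] 0) (𝓝 0) := by
  have hs : ∀ᶠ s in 𝓝[>] (0 : ℝ), s ∈ Ioo 0 1 := Ioo_mem_nhdsGT one_pos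
  have key := tendsto_integral_filter_of_dominated_convergence (μ := μ.restrict (Ioi 0))
    (l := 𝓝[>] (0 : ℝ)) (F := fun s u => min u s * G u)
    (f := fun _ => (0 : ℝ)) (fun u => ‖min u 1 * G u‖) ?_ ?_ hint.norm ?_
  · simpa using key
  · filter_upwards [hs] with s hs
    exact (integrableOn_min_mul hG hint hs.1.le hs.2.le).aestronglyMeasurable
  · filter_upwards [hs] with s hs
    filter_upwards [ae_restrict_mem measurableSet_Ioi] with u hu
    exact norm_min_mul_le_norm_min_one_mul (le_of_lt hu) hs.1.le hs.2.le (G u)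
  · filter_upwards [ae_restrict_mem measurableSet_Ioi] with u hu
    have hmin : Tendsto (fun s => min u s) (𝓝[>] 0) (𝓝 (min u 0)) :=
      tendsto_const_nhds.min (tendsto_nhdsWithin_of_tendsto_nhds tendsto_id)
    simpa [min_eq_right (le_of_lt (mem_Ioi.1 hu))] using hmin.mul_const (G u)

end minMul

section phi

variable {ν : Measure ℝ} {g : ℝ → ℝ} {A : ℝ}

lemma integrableOn_min_one_mul_leftOsc (hg : ∀ K : Set ℝ, IsCompact K → ∃ M : ℝ, ∀ y ∈ K, |g y| ≤ M)
    (h1 : ContDiffAt ℝ 1 g A)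
    (hν : ∫⁻ z in Ioi (0 : ℝ), ENNReal.ofReal (min 1 (z ^ 2)) ∂ν < ⊤)
    (hC2 : ∫⁻ u in Ioi (1 : ℝ), ENNReal.ofReal (leftOsc g A u) ∂ν < ⊤) :
    IntegrableOn (fun u => min u 1 * leftOsc g A u) (Ioi 0) ν := by
  obtain ⟨L, hL, hosc⟩ := exists_leftOsc_le_mul hg h1
  have hmeas : Measurable (leftOsc g A) := (monotone_leftOsc hg).measurable
  have hlevy : IntegrableOn (fun u : ℝ => min 1 (u ^ 2)) (Ioi 0) ν :=
    (lintegral_ofReal_ne_top_iff_integrable (by fun_prop)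
      (ae_of_all _ fun u => le_min zero_le_one (sq_nonneg u))).1 hν.ne
  have htail : IntegrableOn (leftOsc g A) (Ioi 1) ν :=
    (lintegral_ofReal_ne_top_iff_integrable hmeas.aestronglyMeasurable
      (ae_of_all _ leftOsc_nonneg)).1 hC2.ne
  refine Integrable.mono' ((hlevy.const_mul L).add
    ((integrable_indicator_iff measurableSet_Ioi).2 htail).integrableOn)
    ((by fun_prop : Measurable fun u : ℝ => min u 1).mul hmeas).aestronglyMeasurable ?_
  filter_upwards [ae_restrict_mem measurableSet_Ioi] with u hu
  have hu : 0 < u := hu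
  rw [Real.norm_of_nonneg (mul_nonneg (le_min hu.le zero_le_one) (leftOsc_nonneg u))]
  simp only [Pi.add_apply]
  rcases le_or_gt u 1 with hu1 | hu1
  · have hsq : min 1 (u ^ 2) = u ^ 2 := min_eq_right (pow_le_one₀ hu.le hu1)
    rw [min_eq_left hu1, hsq, indicator_of_notMem (s := Ioi 1) (not_lt.2 hu1), add_zero]
    nlinarith [hosc u ⟨hu.le, hu1⟩]
  · rw [min_eq_right hu1.le, indicator_of_mem (mem_Ioi.2 hu1), one_mul]
    exact le_add_of_nonneg_left (mul_nonneg hL (le_min zero_le_one (sq_nonneg u)))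

lemma norm_phiFun_integrand_le (hg : ∀ K : Set ℝ, IsCompact K → ∃ M : ℝ, ∀ y ∈ K, |g y| ≤ M)
    {W : ℝ → ℝ} {Wb x u : ℝ} (hWb : ∀ y ∈ Icc (0 : ℝ) 1, ‖W y‖ ≤ Wb)
    (hx : x ∈ Ioc A (A + 1)) (hu : 0 < u) :
    ‖∫ z in (0 : ℝ)..min u (x - A), W (x - z - A) * (g (z + A - u) - g A)‖ ≤
      Wb * (min u (x - A) * leftOsc g A u) := by
  have hm : 0 ≤ min u (x - A) := le_min hu.le (by linarith [hx.1])
  have hbound : ∀ z ∈ uIoc 0 (min u (x - A)),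
      ‖W (x - z - A) * (g (z + A - u) - g A)‖ ≤ Wb * leftOsc g A u := by
    intro z hz
    rw [uIoc_of_le hm] at hz
    have hzu := hz.2.trans (min_le_left _ _)
    have hzx := hz.2.trans (min_le_right _ _)
    rw [norm_mul, Real.norm_eq_abs (g _ - _)]
    exact mul_le_mul (hWb _ ⟨by linarith, by linarith [hz.1, hx.2]⟩)
      (abs_sub_le_leftOsc hg ⟨by linarith [hz.1], by linarith⟩) (abs_nonneg _)
      ((norm_nonneg _).trans (hWb 0 ⟨le_rfl, zero_le_one⟩))
  calc _ ≤ Wb * leftOsc g A u * |min u (x - A) - 0| :=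
        intervalIntegral.norm_integral_le_of_norm_le_const hbound
    _ = Wb * (min u (x - A) * leftOsc g A u) := by rw [sub_zero, abs_of_nonneg hm]; ring

lemma tendsto_phiFun_nhdsGT (hg : ∀ K : Set ℝ, IsCompact K → ∃ M : ℝ, ∀ y ∈ K, |g y| ≤ M)
    (h1 : ContDiffAt ℝ 1 g A)
    {W : ℝ → ℝ} {Wb : ℝ} (hWb : ∀ y ∈ Icc (0 : ℝ) 1, ‖W y‖ ≤ Wb)
    (hν : ∫⁻ z in Ioi (0 : ℝ), ENNReal.ofReal (min 1 (z ^ 2)) ∂ν < ⊤)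
    (hC2 : ∫⁻ u in Ioi (1 : ℝ), ENNReal.ofReal (leftOsc g A u) ∂ν < ⊤) :
    Tendsto (phiFun ν W g A) (𝓝[>] A) (𝓝 0) := by
  have hD := integrableOn_min_one_mul_leftOsc hg h1 hν hC2
  have hmeas : AEStronglyMeasurable (leftOsc g A) (ν.restrict (Ioi 0)) :=
    (monotone_leftOsc hg).measurable.aestronglyMeasurable
  have hlim : Tendsto (fun x => Wb * ∫ u in Ioi 0, min u (x - A) * leftOsc g A u ∂ν)
      (𝓝[>] A) (𝓝 0) := by
    simpa using ((tendsto_setIntegral_min_mul_nhdsGT_zero hmeas hD).comp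
      (tendsto_sub_nhdsGT A)).const_mul Wb
  refine squeeze_zero_norm' ?_ hlim
  filter_upwards [Ioo_mem_nhdsGT (show A < A + 1 by linarith)] with x hx
  have hxA : 0 ≤ x - A := by linarith [hx.1]
  rw [← integral_const_mul]
  refine norm_integral_le_of_norm_le
    ((integrableOn_min_mul hmeas hD hxA (by linarith [hx.2])).const_mul Wb) ?_
  filter_upwards [ae_restrict_mem measurableSet_Ioi] with u hu
  exact norm_phiFun_integrand_le hg hWb (Ioo_subset_Ioc_self hx) hu

end phi

lemma tendsto_Zfun_nhdsGT_zero {q Wb : ℝ} {W : ℝ → ℝ} (hWb : ∀ y ∈ Icc (0 : ℝ) 1, ‖W y‖ ≤ Wb) :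
    Tendsto (Zfun q W) (𝓝[>] 0) (𝓝 1) := by
  have hint : Tendsto (fun s => ∫ y in (0 : ℝ)..s, W y) (𝓝[>] 0) (𝓝 0) :=
    tendsto_intervalIntegral_nhdsGT_of_norm_le (M := Wb) <| by
      filter_upwards [Ioo_mem_nhdsGT one_pos] with s hs y hy
      exact hWb y ⟨hy.1.le, hy.2.trans hs.2.le⟩
  refine Tendsto.congr' ?_ (by simpa using (hint.const_mul q).const_add 1)
  filter_upwards [self_mem_nhdsWithin] with s hs
  rw [Zfun, max_eq_left (le_of_lt hs)]

lemma tendsto_intervalIntegral_sub_mul_nhdsGT {W h : ℝ → ℝ} {A Wb Mh : ℝ}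
    (hWb : ∀ y ∈ Icc (0 : ℝ) 1, ‖W y‖ ≤ Wb) (hMh : ∀ y ∈ Icc A (A + 1), |h y| ≤ Mh) :
    Tendsto (fun x => ∫ y in A..x, W (x - y) * h y) (𝓝[>] A) (𝓝 0) :=
  tendsto_intervalIntegral_nhdsGT_of_norm_le (M := Wb * Mh) <| by
    filter_upwards [Ioo_mem_nhdsGT (show A < A + 1 by linarith)] with x hx y hy
    rw [norm_mul, Real.norm_eq_abs (h y)]
    exact mul_le_mul (hWb _ ⟨by linarith [hy.2], by linarith [hy.1, hx.2]⟩)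
      (hMh y ⟨hy.1.le, by linarith [hy.2, hx.2]⟩) (abs_nonneg _)
      ((norm_nonneg _).trans (hWb 0 ⟨le_rfl, zero_le_one⟩))

theorem tendsto_Ufun_nhdsGT {ν : Measure ℝ} {q Φ A : ℝ} {g W h : ℝ → ℝ}
    (hν : ∫⁻ z in Ioi (0 : ℝ), ENNReal.ofReal (min 1 (z ^ 2)) ∂ν < ⊤)
    (hg : ∀ K : Set ℝ, IsCompact K → ∃ M : ℝ, ∀ y ∈ K, |g y| ≤ M)
    (hW : ContinuousOn W (Ici 0)) (h1 : ContDiffAt ℝ 1 g A)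
    (hC2 : ∫⁻ u in Ioi (1 : ℝ), ENNReal.ofReal (leftOsc g A u) ∂ν < ⊤)
    (hh : ∀ K : Set ℝ, IsCompact K → ∃ M : ℝ, ∀ y ∈ K, |h y| ≤ M) :
    Tendsto (Ufun q Φ ν W g h A) (𝓝[>] A) (𝓝 (g A + W 0 * PsiFun q Φ ν g h A)) := by
  obtain ⟨Wb, hWb⟩ := isCompact_Icc.exists_bound_of_continuousOn (hW.mono Icc_subset_Ici_self)
  obtain ⟨Mh, hMh⟩ := hh (Icc A (A + 1)) isCompact_Icc
  have hsub := tendsto_sub_nhdsGT A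
  have hWA : Tendsto (fun x => W (x - A)) (𝓝[>] A) (𝓝 (W 0)) :=
    (hW.continuousWithinAt self_mem_Ici).tendsto.comp
      (hsub.mono_right (nhdsWithin_mono _ Ioi_subset_Ici_self))
  have hZA := (tendsto_Zfun_nhdsGT_zero (q := q) hWb).comp hsub
  have hφ := tendsto_phiFun_nhdsGT hg h1 hWb hν hC2
  have hlast := tendsto_intervalIntegral_sub_mul_nhdsGT hWb hMh
  convert ((((hZA.sub (hWA.const_mul (q / Φ))).const_mul (g A)).add
    (hWA.mul_const (rhoFun ν Φ g A))).sub hφ |>.add (hWA.mul_const (hInt Φ h A))).sub hlast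
    using 2
  · rfl
  · rw [PsiFun]
    ring

theorem continuous_fit_general
    (ν : Measure ℝ) (q Φ A : ℝ) (g W h : ℝ → ℝ)
    (hν : ∫⁻ z in Set.Ioi (0:ℝ), ENNReal.ofReal (min 1 (z ^ 2)) ∂ν < ⊤)
    (hgb : ∀ K : Set ℝ, IsCompact K → ∃ M : ℝ, ∀ y ∈ K, |g y| ≤ M)
    (hWc : ContinuousOn W (Set.Ici 0))
    (hC1 : ∃ ε > (0:ℝ), ContDiffOn ℝ 2 g (Set.Ioo (A - ε) (A + ε)))
    (hC2 : ∫⁻ u in Set.Ioi (1:ℝ),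
        ENNReal.ofReal (sSup ((fun ζ => |g ζ - g A|) '' Set.Icc (A - u) A)) ∂ν < ⊤)
    (hhb : ∀ K : Set ℝ, IsCompact K → ∃ M : ℝ, ∀ y ∈ K, |h y| ≤ M) :
    Filter.Tendsto (fun x => Ufun q Φ ν W g h A x) (nhdsWithin A (Set.Ioi A))
        (nhds (g A + W 0 * PsiFun q Φ ν g h A))
    ∧ (0 < W 0 →
        (Filter.Tendsto (fun x => Ufun q Φ ν W g h A x) (nhdsWithin A (Set.Ioi A))
            (nhds (g A)) ↔ PsiFun q Φ ν g h A = 0))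
    ∧ (W 0 = 0 →
        Filter.Tendsto (fun x => Ufun q Φ ν W g h A x) (nhdsWithin A (Set.Ioi A))
          (nhds (g A))) := by
  obtain ⟨ε, hε, hg₂⟩ := hC1
  have h1 : ContDiffAt ℝ 1 g A :=
    (hg₂.contDiffAt (Ioo_mem_nhds (by linarith) (by linarith))).of_le one_le_two
  have hlim := tendsto_Ufun_nhdsGT (q := q) (Φ := Φ) hν hgb hWc h1 hC2 hhb
  refine ⟨hlim, fun hpos => ⟨fun hfit => ?_, fun hΨ => by simpa [hΨ] using hlim⟩,
    fun hW0 => by simpa [hW0] using hlim⟩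
  have hΨ : W 0 * PsiFun q Φ ν g h A = 0 := by linarith [tendsto_nhds_unique hfit hlim]
  exact (mul_eq_zero.1 hΨ).resolve_left hpos.ne'

/-- Continuous fit: under (C1)-(C2),
`lim_{x↓A} U_A(x) = g(A) + W(0)Ψ(A)`; hence if `W(0) > 0` the continuous-fit
condition `lim_{x↓A} U_A(x) = g(A)` holds iff `Ψ(A) = 0`, while if `W(0) = 0` it
holds automatically. -/
theorem continuous_fit
    (ν : Measure ℝ) (q Φ A C : ℝ) (g W h : ℝ → ℝ)
    (hν : ∫⁻ z in Set.Ioi (0:ℝ), ENNReal.ofReal (min 1 (z ^ 2)) ∂ν < ⊤)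
    (hq : 0 < q) (hΦ : 0 < Φ)
    (hgm : Measurable g)
    (hgb : ∀ K : Set ℝ, IsCompact K → ∃ M : ℝ, ∀ y ∈ K, |g y| ≤ M)
    (hW0 : ∀ y < (0:ℝ), W y = 0)
    (hWc : ContinuousOn W (Set.Ici 0))
    (hWm : MonotoneOn W (Set.Ici 0))
    (hWΦm : MonotoneOn (fun y => Real.exp (-Φ * y) * W y) (Set.Ici 0))
    (hWΦb : ∀ y ∈ Set.Ici (0:ℝ), Real.exp (-Φ * y) * W y ≤ C)
    (hC1 : ∃ ε > (0:ℝ), ContDiffOn ℝ 2 g (Set.Ioo (A - ε) (A + ε)))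
    (hC2 : ∫⁻ u in Set.Ioi (1:ℝ),
        ENNReal.ofReal (sSup ((fun ζ => |g ζ - g A|) '' Set.Icc (A - u) A)) ∂ν < ⊤)
    (hhm : Measurable h)
    (hhb : ∀ K : Set ℝ, IsCompact K → ∃ M : ℝ, ∀ y ∈ K, |h y| ≤ M)
    (hhint : IntegrableOn (fun y => Real.exp (-Φ * y) * h (y + A)) (Set.Ioi 0)) :
    Filter.Tendsto (fun x => Ufun q Φ ν W g h A x) (nhdsWithin A (Set.Ioi A))
        (nhds (g A + W 0 * PsiFun q Φ ν g h A))
    ∧ (0 < W 0 →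
        (Filter.Tendsto (fun x => Ufun q Φ ν W g h A x) (nhdsWithin A (Set.Ioi A))
            (nhds (g A)) ↔ PsiFun q Φ ν g h A = 0))
    ∧ (W 0 = 0 →
        Filter.Tendsto (fun x => Ufun q Φ ν W g h A x) (nhdsWithin A (Set.Ioi A))
          (nhds (g A))) :=
  continuous_fit_general ν q Φ A g W h hν hgb hWc hC1 hC2 hhb
end

section
/- Let q > 0 and Φ > 0 with Φ ≠ 1 and ψ(Φ) = q. Then the integral ∫_{(0,∞)} [ (1 − e^{−Φu}) − e^{−u}(1 − e^{−(Φ−1)u})·Φ/(Φ−1) ] Π(du) converges absolutely, and M_q := q + (σ²/2)Φ + ∫_{(0,∞)} [ (1 − e^{−Φu}) − e^{−u}(1 − e^{−(Φ−1)u})·Φ/(Φ−1) ] Π(du) satisfies M_q = Φ(q − ψ(1))/(Φ − 1). -/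
/-!
Write `ψ(β) = cβ + (σ²/2)β² + ∫ g_β dΠ`. The integrand of `M_q` is `(g_Φ − Φ g_1)/(Φ − 1)`,
since the compensators `βz 1_{(0,1)}(z)` cancel in `g_Φ − Φ g_1`. For `β ≥ 0`,
`0 ≤ e^{−x} − 1 + x ≤ min(x, x²)` gives `|g_β| ≤ max 1 β² · min 1 z²`, so each `g_β` is
`Π`-integrable and the integral splits. Then
`ψ(Φ) − Φ ψ(1) = (σ²/2)Φ(Φ − 1) + ∫ (g_Φ − Φ g_1) dΠ` (the drift `c` cancels too), and
substituting `ψ(Φ) = q` gives the identity.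
-/

open MeasureTheory Real Set Filter

/-- Laplace exponent `ψ(β) = cβ + (σ²/2)β² + ∫_{(0,∞)} (e^{−βz} − 1 + βz 1_{(0,1)}(z)) ν(dz)`. -/
noncomputable def laplaceExponent (c σ : ℝ) (ν : Measure ℝ) (β : ℝ) : ℝ :=
  c * β + σ ^ 2 / 2 * β ^ 2 +
    ∫ z in Set.Ioi (0:ℝ),
      (Real.exp (-β * z) - 1 + Set.indicator (Set.Ioo (0:ℝ) 1) (fun w => β * w) z) ∂ν

noncomputable def levyIntegrand (β z : ℝ) : ℝ :=
  exp (-β * z) - 1 + indicator (Ioo (0:ℝ) 1) (fun w => β * w) z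

lemma laplaceExponent_eq (c σ : ℝ) (ν : Measure ℝ) (β : ℝ) :
    laplaceExponent c σ ν β = c * β + σ ^ 2 / 2 * β ^ 2 + ∫ z in Ioi 0, levyIntegrand β z ∂ν :=
  rfl

lemma measurable_levyIntegrand (β : ℝ) : Measurable (levyIntegrand β) :=
  (by fun_prop : Measurable fun z => exp (-β * z) - 1).add
    ((measurable_const_mul β).indicator measurableSet_Ioo)

lemma exp_neg_sub_one_add_nonneg (x : ℝ) : 0 ≤ exp (-x) - 1 + x := by
  linarith [add_one_le_exp (-x)]

lemma exp_neg_sub_one_add_le_sq {x : ℝ} (hx : 0 ≤ x) : exp (-x) - 1 + x ≤ x ^ 2 := by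
  rcases le_or_gt x 1 with hx1 | hx1
  · have := abs_exp_sub_one_sub_id_le (x := -x) (by rwa [abs_neg, abs_of_nonneg hx])
    linarith [(abs_le.1 this).2, neg_sq x]
  · nlinarith [exp_le_one_iff.2 (neg_nonpos.2 hx)]

lemma abs_levyIntegrand_le {β z : ℝ} (hβ : 0 ≤ β) (hz : 0 < z) :
    |levyIntegrand β z| ≤ max 1 (β ^ 2) * min 1 (z ^ 2) := by
  rcases lt_or_ge z 1 with hz1 | hz1
  · have hβz : 0 ≤ β * z := mul_nonneg hβ hz.le
    have hval : levyIntegrand β z = exp (-(β * z)) - 1 + β * z := by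
      rw [levyIntegrand, indicator_of_mem (show z ∈ Ioo 0 1 from ⟨hz, hz1⟩), neg_mul]
    rw [hval, abs_of_nonneg (exp_neg_sub_one_add_nonneg _), min_eq_right (by nlinarith)]
    calc exp (-(β * z)) - 1 + β * z ≤ β ^ 2 * z ^ 2 := by
          simpa [mul_pow] using exp_neg_sub_one_add_le_sq hβz
      _ ≤ max 1 (β ^ 2) * z ^ 2 := by gcongr; exact le_max_right _ _
  · have hval : levyIntegrand β z = exp (-β * z) - 1 := by
      rw [levyIntegrand, indicator_of_notMem (fun h => hz1.not_gt h.2), add_zero]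
    have hexp : exp (-β * z) ≤ 1 := exp_le_one_iff.2 (by nlinarith)
    rw [hval, min_eq_left (by nlinarith), mul_one, abs_le]
    constructor <;> linarith [exp_pos (-β * z), le_max_left 1 (β ^ 2)]

lemma integrableOn_levyIntegrand {ν : Measure ℝ}
    (hν : ∫⁻ z in Ioi (0:ℝ), ENNReal.ofReal (min 1 (z ^ 2)) ∂ν < ⊤) {β : ℝ} (hβ : 0 ≤ β) :
    IntegrableOn (levyIntegrand β) (Ioi 0) ν := by
  have hmin : IntegrableOn (fun z : ℝ => min 1 (z ^ 2)) (Ioi 0) ν := by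
    refine ⟨by fun_prop, ?_⟩
    rwa [hasFiniteIntegral_iff_ofReal (ae_of_all _ fun z => le_min zero_le_one (sq_nonneg z))]
  refine (hmin.const_mul (max 1 (β ^ 2))).mono'
    (measurable_levyIntegrand β).aestronglyMeasurable ?_
  filter_upwards [ae_restrict_mem measurableSet_Ioi] with z hz
  exact abs_levyIntegrand_le hβ hz

lemma Mq_integrand_eq {Φ : ℝ} (hΦ1 : Φ ≠ 1) (u : ℝ) :
    (1 - exp (-Φ * u)) - exp (-u) * (1 - exp (-(Φ - 1) * u)) * Φ / (Φ - 1)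
      = (levyIntegrand Φ u - Φ * levyIntegrand 1 u) / (Φ - 1) := by
  have hne : Φ - 1 ≠ 0 := sub_ne_zero.2 hΦ1
  have hexp : exp (-u) * exp (-(Φ - 1) * u) = exp (-Φ * u) := by rw [← exp_add]; ring_nf
  have hcomp : indicator (Ioo (0:ℝ) 1) (fun w => Φ * w) u
      = Φ * indicator (Ioo (0:ℝ) 1) (fun w => 1 * w) u := by
    by_cases hu : u ∈ Ioo (0:ℝ) 1 <;> simp [hu]
  rw [mul_sub, mul_one, hexp, levyIntegrand, levyIntegrand, hcomp, neg_one_mul]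
  field_simp
  ring

theorem M_q_identity_general
    (c σ q Φ : ℝ) (ν : Measure ℝ)
    (hν : ∫⁻ z in Set.Ioi (0:ℝ), ENNReal.ofReal (min 1 (z ^ 2)) ∂ν < ⊤)
    (hΦ : 0 < Φ) (hΦ1 : Φ ≠ 1)
    (hψΦ : laplaceExponent c σ ν Φ = q) :
    IntegrableOn
      (fun u => (1 - Real.exp (-Φ * u)) -
        Real.exp (-u) * (1 - Real.exp (-(Φ - 1) * u)) * Φ / (Φ - 1)) (Set.Ioi 0) ν
    ∧ q + σ ^ 2 / 2 * Φ +
        (∫ u in Set.Ioi (0:ℝ),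
          ((1 - Real.exp (-Φ * u)) -
            Real.exp (-u) * (1 - Real.exp (-(Φ - 1) * u)) * Φ / (Φ - 1)) ∂ν)
      = Φ * (q - laplaceExponent c σ ν 1) / (Φ - 1) := by
  have hgΦ := integrableOn_levyIntegrand hν hΦ.le
  have hg1 := (integrableOn_levyIntegrand hν zero_le_one).const_mul Φ
  simp_rw [Mq_integrand_eq hΦ1]
  refine ⟨(hgΦ.sub hg1).div_const _, ?_⟩
  rw [integral_div, integral_sub hgΦ hg1, integral_const_mul]
  rw [laplaceExponent_eq] at hψΦ ⊢
  have hne : Φ - 1 ≠ 0 := sub_ne_zero.2 hΦ1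
  field_simp
  linear_combination 2 * hψΦ

/-- for `q > 0` and `Φ > 0` with `Φ ≠ 1` and `ψ(Φ) = q`, the integral
`∫_{(0,∞)} [(1 − e^{−Φu}) − e^{−u}(1 − e^{−(Φ−1)u})Φ/(Φ−1)] ν(du)` converges
absolutely and `M_q := q + (σ²/2)Φ + ∫ ... = Φ(q − ψ(1))/(Φ − 1)`. -/
theorem M_q_identity
    (c σ q Φ : ℝ) (ν : Measure ℝ)
    (hσ : 0 ≤ σ)
    (hν : ∫⁻ z in Set.Ioi (0:ℝ), ENNReal.ofReal (min 1 (z ^ 2)) ∂ν < ⊤)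
    (hq : 0 < q) (hΦ : 0 < Φ) (hΦ1 : Φ ≠ 1)
    (hψΦ : laplaceExponent c σ ν Φ = q) :
    IntegrableOn
      (fun u => (1 - Real.exp (-Φ * u)) -
        Real.exp (-u) * (1 - Real.exp (-(Φ - 1) * u)) * Φ / (Φ - 1)) (Set.Ioi 0) ν
    ∧ q + σ ^ 2 / 2 * Φ +
        (∫ u in Set.Ioi (0:ℝ),
          ((1 - Real.exp (-Φ * u)) -
            Real.exp (-u) * (1 - Real.exp (-(Φ - 1) * u)) * Φ / (Φ - 1)) ∂ν)
      = Φ * (q - laplaceExponent c σ ν 1) / (Φ - 1) :=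
  M_q_identity_general c σ q Φ ν hν hΦ hΦ1 hψΦ
end

section
/- Fix q > 0, K > 0, Φ > 0 with Φ ≠ 1, A ∈ ℝ, and let g(x) := K − e^x. Then ρ̄_{g,A} := ∫_{(0,∞)} Π(du) ∫_0^u e^{−Φz} |g(z+A−u) − g(A)| dz < ∞ and −(q/Φ) g(A) + ρ_{g,A} = −(q/Φ) K + (e^A/Φ) · [ q + ∫_{(0,∞)} ( (1 − e^{−Φu}) − e^{−u}(1 − e^{−(Φ−1)u})·Φ/(Φ−1) ) Π(du) ]. -/
open MeasureTheory Real Set Filter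

lemma exp_int_aux (c : ℝ) (hc : c ≠ 0) (u : ℝ) :
    ∫ z in (0:ℝ)..u, Real.exp (c * z) = (Real.exp (c * u) - 1) / c := by
  have h : ∀ z : ℝ, HasDerivAt (fun z => Real.exp (c * z) / c) (Real.exp (c * z)) z := by
    intro z
    have h1 : HasDerivAt (fun z : ℝ => c * z) c z := by
      simpa using (hasDerivAt_id z).const_mul c
    have h3 := ((Real.hasDerivAt_exp (c * z)).comp z h1).div_const c
    simpa [mul_comm, mul_div_assoc, mul_div_cancel_left₀, hc] using h3
  rw [intervalIntegral.integral_eq_sub_of_hasDerivAt (fun z _ => h z)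
      ((Real.continuous_exp.comp (continuous_const.mul continuous_id)).intervalIntegrable 0 u)]
  simp [sub_div]

lemma inner_eq_aux (K Φ A : ℝ) (hΦ : 0 < Φ) (hΦ1 : Φ ≠ 1) (u : ℝ) :
    ∫ z in (0:ℝ)..u, Real.exp (-Φ * z) * ((K - Real.exp (z + A - u)) - (K - Real.exp A))
      = Real.exp A / Φ * ((1 - Real.exp (-Φ * u)) -
          Real.exp (-u) * (1 - Real.exp (-(Φ - 1) * u)) * Φ / (Φ - 1)) := by
  have hne : Φ ≠ 0 := ne_of_gt hΦ
  have h1 : Φ - 1 ≠ 0 := sub_ne_zero.mpr hΦ1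
  have h2 : (1 - Φ) ≠ 0 := by intro h; apply h1; linarith
  have congr1 : ∀ z : ℝ, Real.exp (-Φ * z) * ((K - Real.exp (z + A - u)) - (K - Real.exp A))
      = Real.exp A * Real.exp (-Φ * z) - Real.exp (A - u) * Real.exp ((1 - Φ) * z) := by
    intro z
    have e1 : Real.exp (-Φ * z) * Real.exp (z + A - u)
        = Real.exp (A - u) * Real.exp ((1 - Φ) * z) := by
      rw [← Real.exp_add, ← Real.exp_add]; ring_nf
    have e0 : Real.exp (-Φ * z) * ((K - Real.exp (z + A - u)) - (K - Real.exp A))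
        = Real.exp (-Φ * z) * Real.exp A - Real.exp (-Φ * z) * Real.exp (z + A - u) := by ring
    rw [e0, e1]; ring
  simp_rw [congr1]
  have ci : ∀ c d : ℝ, IntervalIntegrable (fun z : ℝ => c * Real.exp (d * z))
      MeasureTheory.volume 0 u := by
    intro c d
    exact Continuous.intervalIntegrable (by fun_prop) 0 u
  rw [intervalIntegral.integral_sub (ci _ _) (ci _ _),
    intervalIntegral.integral_const_mul, intervalIntegral.integral_const_mul,
    exp_int_aux (-Φ) (neg_ne_zero.mpr hne) u, exp_int_aux (1 - Φ) h2 u]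
  have e2 : Real.exp (A - u) = Real.exp A * Real.exp (-u) := by
    rw [← Real.exp_add]; ring_nf
  have e3 : (1 - Φ) * u = -(Φ - 1) * u := by ring
  rw [e2, e3]
  field_simp [hne, h1]
  ring

/-- for the McKean payoff `g(x) = K − eˣ` (with `Φ ≠ 1`),
`ρ̄_{g,A} < ∞` and
`−(q/Φ)g(A) + ρ_{g,A} = −(q/Φ)K + (e^A/Φ)[q + ∫_{(0,∞)} ((1 − e^{−Φu}) −
  e^{−u}(1 − e^{−(Φ−1)u})Φ/(Φ−1)) ν(du)]`. -/
theorem mckean_rho_identity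
    (ν : Measure ℝ) (q K Φ A : ℝ)
    (hν : ∫⁻ z in Set.Ioi (0:ℝ), ENNReal.ofReal (min 1 (z ^ 2)) ∂ν < ⊤)
    (hq : 0 < q) (hK : 0 < K) (hΦ : 0 < Φ) (hΦ1 : Φ ≠ 1) :
    (∫⁻ u in Set.Ioi (0:ℝ),
      (∫⁻ z in Set.Ioo (0:ℝ) u,
        ENNReal.ofReal (Real.exp (-Φ * z) *
          |(K - Real.exp (z + A - u)) - (K - Real.exp A)|)) ∂ν) < ⊤
    ∧ -(q / Φ) * (K - Real.exp A) +
        (∫ u in Set.Ioi (0:ℝ),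
          (∫ z in (0:ℝ)..u,
            Real.exp (-Φ * z) * ((K - Real.exp (z + A - u)) - (K - Real.exp A))) ∂ν)
      = -(q / Φ) * K + Real.exp A / Φ *
          (q + ∫ u in Set.Ioi (0:ℝ),
            ((1 - Real.exp (-Φ * u)) -
              Real.exp (-u) * (1 - Real.exp (-(Φ - 1) * u)) * Φ / (Φ - 1)) ∂ν) := by
  constructor
  · -- finiteness
    set I : ℝ := ∫ z in Set.Ioi (0:ℝ), Real.exp (-Φ * z) with hI
    have hInn : 0 ≤ I := integral_nonneg fun z => (Real.exp_pos _).le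
    set C : ℝ := Real.exp A * (I + 1) with hC
    have hC0 : 0 ≤ C := mul_nonneg (Real.exp_pos _).le (by linarith)
    have key : ∀ u ∈ Set.Ioi (0:ℝ),
        (∫⁻ z in Set.Ioo (0:ℝ) u,
          ENNReal.ofReal (Real.exp (-Φ * z) *
            |(K - Real.exp (z + A - u)) - (K - Real.exp A)|))
          ≤ ENNReal.ofReal C * ENNReal.ofReal (min 1 (u ^ 2)) := by
      intro u hu
      rw [Set.mem_Ioi] at hu
      by_cases hu1 : u ≤ 1
      · -- small u : bound by exp A * u on each z, volume u
        have hmin : min 1 (u ^ 2) = u ^ 2 := min_eq_right (by nlinarith)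
        calc (∫⁻ z in Set.Ioo (0:ℝ) u,
              ENNReal.ofReal (Real.exp (-Φ * z) *
                |(K - Real.exp (z + A - u)) - (K - Real.exp A)|))
            ≤ ∫⁻ _z in Set.Ioo (0:ℝ) u, ENNReal.ofReal (Real.exp A * u) := by
              apply setLIntegral_mono measurable_const
              intro z hz
              apply ENNReal.ofReal_le_ofReal
              have hz1 : 0 < z := hz.1
              have hz2 : z < u := hz.2
              have habs : |(K - Real.exp (z + A - u)) - (K - Real.exp A)|
                  = Real.exp A - Real.exp (z + A - u) := by
                rw [abs_of_nonneg] <;>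
                  [skip; skip] <;>
                  · have := Real.exp_le_exp.mpr (show z + A - u ≤ A by linarith)
                    linarith
              rw [habs]
              have hexp1 : Real.exp (-Φ * z) ≤ 1 :=
                Real.exp_le_one_iff.mpr (by nlinarith)
              have hbd : Real.exp A - Real.exp (z + A - u) ≤ Real.exp A * u := by
                have e1 : Real.exp (z + A - u) = Real.exp A * Real.exp (z - u) := by
                  rw [← Real.exp_add]; ring_nf
                rw [e1]
                nlinarith [Real.add_one_le_exp (z - u), Real.exp_pos A]
              have hnn : 0 ≤ Real.exp A - Real.exp (z + A - u) := by
                have := Real.exp_le_exp.mpr (show z + A - u ≤ A by linarith)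
                linarith
              calc Real.exp (-Φ * z) * (Real.exp A - Real.exp (z + A - u))
                  ≤ 1 * (Real.exp A * u) := by
                    apply mul_le_mul hexp1 hbd hnn zero_le_one
                _ = Real.exp A * u := one_mul _
          _ = ENNReal.ofReal (Real.exp A * u) * ENNReal.ofReal u := by
              rw [setLIntegral_const, Real.volume_Ioo, sub_zero]
          _ ≤ ENNReal.ofReal C * ENNReal.ofReal (min 1 (u ^ 2)) := by
              rw [← ENNReal.ofReal_mul (by positivity), ← ENNReal.ofReal_mul hC0]
              apply ENNReal.ofReal_le_ofReal
              rw [hmin, hC]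
              have huu : Real.exp A * u * u = Real.exp A * u ^ 2 := by ring
              rw [huu]
              nlinarith [mul_nonneg (mul_nonneg (Real.exp_pos A).le hInn) (sq_nonneg u)]
      · -- large u : bound by exp A * exp(-Φ z)
        push_neg at hu1
        have hmin : min 1 (u ^ 2) = 1 := min_eq_left (by nlinarith)
        calc (∫⁻ z in Set.Ioo (0:ℝ) u,
              ENNReal.ofReal (Real.exp (-Φ * z) *
                |(K - Real.exp (z + A - u)) - (K - Real.exp A)|))
            ≤ ∫⁻ z in Set.Ioo (0:ℝ) u,
                ENNReal.ofReal (Real.exp A * Real.exp (-Φ * z)) := by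
              apply setLIntegral_mono
              · exact (measurable_const.mul
                  (Real.measurable_exp.comp (measurable_const.mul measurable_id))).ennreal_ofReal
              intro z hz
              apply ENNReal.ofReal_le_ofReal
              have habs : |(K - Real.exp (z + A - u)) - (K - Real.exp A)|
                  = Real.exp A - Real.exp (z + A - u) := by
                rw [abs_of_nonneg] <;>
                  [skip; skip] <;>
                  · have := Real.exp_le_exp.mpr (show z + A - u ≤ A by linarith [hz.1, hz.2])
                    linarith
              rw [habs, mul_comm (Real.exp A)]
              apply mul_le_mul_of_nonneg_left _ (Real.exp_pos _).le
              linarith [Real.exp_pos (z + A - u)]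
          _ ≤ ∫⁻ z in Set.Ioi (0:ℝ),
                ENNReal.ofReal (Real.exp A * Real.exp (-Φ * z)) :=
              lintegral_mono_set Set.Ioo_subset_Ioi_self
          _ = ENNReal.ofReal (∫ z in Set.Ioi (0:ℝ), Real.exp A * Real.exp (-Φ * z)) := by
              rw [ofReal_integral_eq_lintegral_ofReal]
              · exact (exp_neg_integrableOn_Ioi 0 hΦ).const_mul _
              · exact Filter.Eventually.of_forall fun z => by positivity
          _ ≤ ENNReal.ofReal C * ENNReal.ofReal (min 1 (u ^ 2)) := by
              rw [hmin, ENNReal.ofReal_one, mul_one, integral_const_mul]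
              apply ENNReal.ofReal_le_ofReal
              rw [hC]
              nlinarith [Real.exp_pos A]
    calc (∫⁻ u in Set.Ioi (0:ℝ),
          (∫⁻ z in Set.Ioo (0:ℝ) u,
            ENNReal.ofReal (Real.exp (-Φ * z) *
              |(K - Real.exp (z + A - u)) - (K - Real.exp A)|)) ∂ν)
        ≤ ∫⁻ u in Set.Ioi (0:ℝ),
            ENNReal.ofReal C * ENNReal.ofReal (min 1 (u ^ 2)) ∂ν := by
          apply setLIntegral_mono _ key
          exact (measurable_const.mul
            ((measurable_const.min (measurable_id.pow_const 2)).ennreal_ofReal))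
      _ = ENNReal.ofReal C * ∫⁻ u in Set.Ioi (0:ℝ),
            ENNReal.ofReal (min 1 (u ^ 2)) ∂ν :=
          lintegral_const_mul' _ _ ENNReal.ofReal_ne_top
      _ < ⊤ := ENNReal.mul_lt_top ENNReal.ofReal_lt_top hν
  · -- the identity
    have hrw : (∫ u in Set.Ioi (0:ℝ),
          (∫ z in (0:ℝ)..u,
            Real.exp (-Φ * z) * ((K - Real.exp (z + A - u)) - (K - Real.exp A))) ∂ν)
        = Real.exp A / Φ * ∫ u in Set.Ioi (0:ℝ),
            ((1 - Real.exp (-Φ * u)) -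
              Real.exp (-u) * (1 - Real.exp (-(Φ - 1) * u)) * Φ / (Φ - 1)) ∂ν := by
      rw [← integral_const_mul]
      exact integral_congr_ae (Filter.Eventually.of_forall fun u =>
        inner_eq_aux K Φ A hΦ hΦ1 u)
    rw [hrw]
    ring
end

section
/- Let q, K > 0, Φ > 0, M > 0 be real constants and let h : ℝ → ℝ be nondecreasing with ∫_0^∞ e^{−Φy} |h(y+A)| dy < ∞ for every A ∈ ℝ. Define F(A) := −qK/Φ + e^A M/Φ + ∫_0^∞ e^{−Φy} h(y+A) dy. If lim_{A→−∞} ∫_0^∞ e^{−Φy} h(y+A) dy < qK/Φ (the limit exists in [−∞,∞) by monotonicity), then F is continuous and strictly increasing on ℝ, there exists a unique A* ∈ ℝ with F(A*) = 0, and F < 0 on (−∞, A*) while F > 0 on (A*, ∞). -/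
open MeasureTheory Real Set Filter

/-- for constants `q, K, Φ, M > 0` and a nondecreasing `h` with
`∫_0^∞ e^{−Φy}|h(y+A)| dy < ∞` for all `A`, if the (monotone) limit
`lim_{A→−∞} ∫_0^∞ e^{−Φy} h(y+A) dy` (existing in `[−∞,∞)`) is `< qK/Φ`, then
`F(A) = −qK/Φ + e^A M/Φ + ∫_0^∞ e^{−Φy} h(y+A) dy` is continuous and strictly
increasing, has a unique root `A*`, and is negative before `A*` and positive
after. -/
theorem mckean_unique_root
    (q K Φ M : ℝ) (h : ℝ → ℝ)
    (hq : 0 < q) (hK : 0 < K) (hΦ : 0 < Φ) (hM : 0 < M)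
    (hmono : Monotone h)
    (hint : ∀ A : ℝ, IntegrableOn (fun y => Real.exp (-Φ * y) * h (y + A)) (Set.Ioi 0))
    (hlim : ∃ l : EReal,
      Filter.Tendsto
        (fun A : ℝ => ((∫ y in Set.Ioi (0:ℝ), Real.exp (-Φ * y) * h (y + A) : ℝ) : EReal))
        Filter.atBot (nhds l) ∧ l < ((q * K / Φ : ℝ) : EReal)) :
    Continuous (fun A : ℝ =>
        -(q * K) / Φ + Real.exp A * M / Φ +
          ∫ y in Set.Ioi (0:ℝ), Real.exp (-Φ * y) * h (y + A))
    ∧ StrictMono (fun A : ℝ =>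
        -(q * K) / Φ + Real.exp A * M / Φ +
          ∫ y in Set.Ioi (0:ℝ), Real.exp (-Φ * y) * h (y + A))
    ∧ ∃ Astar : ℝ,
        (-(q * K) / Φ + Real.exp Astar * M / Φ +
          ∫ y in Set.Ioi (0:ℝ), Real.exp (-Φ * y) * h (y + Astar)) = 0
        ∧ (∀ B : ℝ,
            (-(q * K) / Φ + Real.exp B * M / Φ +
              ∫ y in Set.Ioi (0:ℝ), Real.exp (-Φ * y) * h (y + B)) = 0 → B = Astar)
        ∧ (∀ B < Astar,
            -(q * K) / Φ + Real.exp B * M / Φ +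
              (∫ y in Set.Ioi (0:ℝ), Real.exp (-Φ * y) * h (y + B)) < 0)
        ∧ (∀ B > Astar,
            -(q * K) / Φ + Real.exp B * M / Φ +
              (∫ y in Set.Ioi (0:ℝ), Real.exp (-Φ * y) * h (y + B)) > 0) := by
  set I : ℝ → ℝ := fun A => ∫ y in Set.Ioi (0:ℝ), Real.exp (-Φ * y) * h (y + A) with hI
  set F : ℝ → ℝ := fun A => -(q * K) / Φ + Real.exp A * M / Φ + I A with hF
  -- monotonicity of I
  have Imono : Monotone I := by
    intro a b hab
    refine setIntegral_mono (hint a) (hint b) ?_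
    intro y
    exact mul_le_mul_of_nonneg_left (hmono (by linarith)) (Real.exp_nonneg _)
  -- continuity of I
  have Icont : Continuous I := by
    rw [continuous_iff_continuousAt]
    intro A₀
    have hcount : {x : ℝ | ¬ ContinuousAt h x}.Countable :=
      hmono.countable_not_continuousAt
    have hpre : ((fun y : ℝ => y + A₀) ⁻¹' {x : ℝ | ¬ ContinuousAt h x}).Countable :=
      hcount.preimage (add_left_injective A₀)
    have hae : ∀ᵐ y : ℝ, ContinuousAt h (y + A₀) := by
      have := hpre.measure_zero (volume : Measure ℝ)
      rw [ae_iff]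
      simpa using this
    have key : Filter.Tendsto (fun A : ℝ => I A) (nhds A₀) (nhds (I A₀)) := by
      apply MeasureTheory.tendsto_integral_filter_of_dominated_convergence
        (fun y => |Real.exp (-Φ * y) * h (y + (A₀ - 1))| +
          |Real.exp (-Φ * y) * h (y + (A₀ + 1))|)
      · exact Filter.Eventually.of_forall fun A => (hint A).1
      · have hmem : Set.Ioo (A₀ - 1) (A₀ + 1) ∈ nhds A₀ :=
          Ioo_mem_nhds (by linarith) (by linarith)
        filter_upwards [hmem] with A hA
        refine Filter.Eventually.of_forall fun y => ?_
        have he : (0:ℝ) ≤ Real.exp (-Φ * y) := Real.exp_nonneg _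
        have h1 : h (y + (A₀ - 1)) ≤ h (y + A) := hmono (by linarith [hA.1])
        have h2 : h (y + A) ≤ h (y + (A₀ + 1)) := hmono (by linarith [hA.2])
        rw [Real.norm_eq_abs, abs_mul, abs_of_nonneg he]
        have e1 : |Real.exp (-Φ * y) * h (y + (A₀ - 1))| =
            Real.exp (-Φ * y) * |h (y + (A₀ - 1))| := by
          rw [abs_mul, abs_of_nonneg he]
        have e2 : |Real.exp (-Φ * y) * h (y + (A₀ + 1))| =
            Real.exp (-Φ * y) * |h (y + (A₀ + 1))| := by
          rw [abs_mul, abs_of_nonneg he]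
        rw [e1, e2, ← mul_add]
        refine mul_le_mul_of_nonneg_left ?_ he
        have := abs_nonneg (h (y + (A₀ - 1)))
        have := abs_nonneg (h (y + (A₀ + 1)))
        have := le_abs_self (h (y + (A₀ + 1)))
        have := neg_abs_le (h (y + (A₀ - 1)))
        rw [abs_le]
        constructor <;> linarith
      · exact ((hint (A₀ - 1)).abs.add (hint (A₀ + 1)).abs)
      · refine ae_restrict_of_ae ?_
        filter_upwards [hae] with y hy
        exact (hy.comp (by fun_prop : ContinuousAt (fun A : ℝ => y + A) A₀)).tendsto.const_mul _
    exact key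
  have Fcont : Continuous F := by
    apply Continuous.add
    · exact (continuous_const.add ((Real.continuous_exp.mul continuous_const).div_const Φ))
    · exact Icont
  have Fsm : StrictMono F := by
    intro a b hab
    have h1 : Real.exp a * M / Φ < Real.exp b * M / Φ := by
      have : Real.exp a < Real.exp b := Real.exp_lt_exp.mpr hab
      have hMΦ : 0 < M / Φ := div_pos hM hΦ
      calc Real.exp a * M / Φ = Real.exp a * (M / Φ) := by ring
        _ < Real.exp b * (M / Φ) := by
            exact mul_lt_mul_of_pos_right this hMΦ
        _ = Real.exp b * M / Φ := by ring
    have h2 : I a ≤ I b := Imono hab.le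
    simp only [hF]
    linarith
  -- F is eventually negative at -∞
  obtain ⟨l, hl_tendsto, hl_lt⟩ := hlim
  obtain ⟨r, hlr, hrq⟩ := EReal.lt_iff_exists_real_btwn.mp hl_lt
  have hrq' : r < q * K / Φ := by exact_mod_cast hrq
  have hev1 : ∀ᶠ A in Filter.atBot, I A < r := by
    have := hl_tendsto.eventually_lt_const hlr
    filter_upwards [this] with A hA
    exact_mod_cast hA
  have hev2 : ∀ᶠ A in Filter.atBot, Real.exp A * M / Φ < q * K / Φ - r := by
    have h0 : Filter.Tendsto (fun A : ℝ => Real.exp A * M / Φ) Filter.atBot (nhds 0) := by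
      have := Real.tendsto_exp_atBot
      have h' : Filter.Tendsto (fun A : ℝ => Real.exp A * M / Φ) Filter.atBot
          (nhds (0 * M / Φ)) := by
        exact ((this.mul_const M).div_const Φ)
      simpa using h'
    exact h0.eventually_lt_const (by linarith)
  obtain ⟨A₁, hA₁r, hA₁e⟩ := (hev1.and hev2).exists
  have hFA₁ : F A₁ < 0 := by
    simp only [hF]
    have : -(q * K) / Φ = -(q * K / Φ) := by ring
    linarith
  -- F is eventually positive at +∞
  have hev3 : ∀ᶠ A in Filter.atTop, q * K / Φ - I 0 < Real.exp A * M / Φ := by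
    have h0 : Filter.Tendsto (fun A : ℝ => Real.exp A * M / Φ) Filter.atTop Filter.atTop := by
      have h1 := Real.tendsto_exp_atTop
      have h2 : Filter.Tendsto (fun A : ℝ => Real.exp A * M) Filter.atTop Filter.atTop :=
        h1.atTop_mul_const hM
      exact h2.atTop_div_const hΦ
    exact h0.eventually_gt_atTop _
  obtain ⟨A₂, hA₂e, hA₂0⟩ := (hev3.and (Filter.eventually_ge_atTop (0:ℝ))).exists
  have hFA₂ : 0 < F A₂ := by
    have : I 0 ≤ I A₂ := Imono hA₂0
    have hneg : -(q * K) / Φ = -(q * K / Φ) := by ring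
    simp only [hF]
    linarith
  -- intermediate value
  have hA₁₂ : A₁ ≤ A₂ := by
    by_contra hc
    push_neg at hc
    have := Fsm hc
    linarith
  have hivt : (0:ℝ) ∈ F '' Set.Icc A₁ A₂ := by
    apply intermediate_value_Icc hA₁₂ Fcont.continuousOn
    exact ⟨hFA₁.le, hFA₂.le⟩
  obtain ⟨Astar, _, hAstar⟩ := hivt
  refine ⟨Fcont, Fsm, Astar, hAstar, ?_, ?_, ?_⟩
  · intro B hB
    exact Fsm.injective (hB.trans hAstar.symm)
  · intro B hB
    have := Fsm hB
    rw [hAstar] at this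
    exact this
  · intro B hB
    have := Fsm hB
    rw [hAstar] at this
    exact this
end

section
/- Let q, K > 0, φ > 0 with φ ≠ 1, and s ∈ ℝ with s(φ − 1) > 0. Let h : ℝ → ℝ be nondecreasing with ∫_0^∞ e^{−φy} |h(y + A*)| dy < ∞, and suppose A* ∈ ℝ satisfies 0 = −qK + e^{A*} · (φ/(φ−1)) · s + φ ∫_0^∞ e^{−φy} h(y + A*) dy. Then for every x < A*: −qK + e^x s + h(x) ≤ 0. -/
open MeasureTheory Real Set Filter

lemma exp_neg_mul_integral (φ : ℝ) (hφ : 0 < φ) :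
    (∫ y in Set.Ioi (0:ℝ), Real.exp (-φ * y)) = 1 / φ := by
  have := integral_comp_mul_left_Ioi (fun x => Real.exp (-x)) 0 hφ
  simp only [mul_zero, smul_eq_mul] at this
  have h2 : (fun x : ℝ => Real.exp (-(φ * x))) = fun x : ℝ => Real.exp (-φ * x) := by
    ext x; ring_nf
  rw [h2] at this
  rw [this, integral_exp_neg_Ioi_zero]
  ring

/-- if `A*` satisfies the first-order condition
`0 = −qK + e^{A*}(φ/(φ−1))s + φ∫_0^∞ e^{−φy} h(y+A*) dy` with `h` nondecreasing
and `s(φ−1) > 0`, then `−qK + eˣ s + h(x) ≤ 0` for every `x < A*`. -/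
theorem mckean_variational_inequality
    (q K φ s Astar : ℝ) (h : ℝ → ℝ)
    (hq : 0 < q) (hK : 0 < K) (hφ : 0 < φ) (hφ1 : φ ≠ 1)
    (hs : s * (φ - 1) > 0)
    (hmono : Monotone h)
    (hint : IntegrableOn (fun y => Real.exp (-φ * y) * h (y + Astar)) (Set.Ioi 0))
    (heq : 0 = -(q * K) + Real.exp Astar * (φ / (φ - 1)) * s +
        φ * ∫ y in Set.Ioi (0:ℝ), Real.exp (-φ * y) * h (y + Astar)) :
    ∀ x < Astar, -(q * K) + Real.exp x * s + h x ≤ 0 := by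
  intro x hx
  -- Step 1: h x ≤ φ * ∫
  have hintc : IntegrableOn (fun y : ℝ => Real.exp (-φ * y) * h x) (Set.Ioi 0) := by
    exact (exp_neg_integrableOn_Ioi 0 hφ).mul_const _
  have hmono' : ∀ y ∈ Set.Ioi (0:ℝ),
      Real.exp (-φ * y) * h x ≤ Real.exp (-φ * y) * h (y + Astar) := by
    intro y hy
    apply mul_le_mul_of_nonneg_left _ (Real.exp_pos _).le
    exact hmono (by linarith [mem_Ioi.mp hy])
  have hle : (∫ y in Set.Ioi (0:ℝ), Real.exp (-φ * y) * h x)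
      ≤ ∫ y in Set.Ioi (0:ℝ), Real.exp (-φ * y) * h (y + Astar) :=
    setIntegral_mono_on hintc hint measurableSet_Ioi hmono'
  have hval : (∫ y in Set.Ioi (0:ℝ), Real.exp (-φ * y) * h x) = h x / φ := by
    rw [MeasureTheory.integral_mul_const, exp_neg_mul_integral φ hφ]
    ring
  have h1 : h x ≤ φ * ∫ y in Set.Ioi (0:ℝ), Real.exp (-φ * y) * h (y + Astar) := by
    rw [hval] at hle
    calc h x = φ * (h x / φ) := by field_simp
    _ ≤ _ := by nlinarith
  -- Step 2: exp x * s ≤ exp Astar * (φ/(φ-1)) * s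
  have h2 : Real.exp x * s ≤ Real.exp Astar * (φ / (φ - 1)) * s := by
    rcases lt_or_gt_of_ne hφ1 with hlt | hgt
    · -- φ < 1, so s < 0 and φ/(φ-1) < 0
      have hsneg : s < 0 := by nlinarith
      have hratio : φ / (φ - 1) < 0 := div_neg_of_pos_of_neg hφ (by linarith)
      nlinarith [Real.exp_pos x, Real.exp_pos Astar, mul_pos (Real.exp_pos Astar) (mul_pos_of_neg_of_neg hratio hsneg)]
    · -- φ > 1, so s > 0 and φ/(φ-1) > 1
      have hspos : s > 0 := by nlinarith
      have hratio : 1 < φ / (φ - 1) := by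
        rw [lt_div_iff₀ (by linarith)]; linarith
      have hexplt : Real.exp x < Real.exp Astar := Real.exp_lt_exp.mpr hx
      nlinarith [mul_lt_mul_of_pos_right hexplt hspos, mul_pos (Real.exp_pos Astar) hspos]
  linarith [heq]
end

section
/- Assume g : ℝ → ℝ is measurable with g = 0 on (0,∞) and g ≤ 0 nondecreasing on (−∞,0], and h : ℝ → ℝ is positive and nondecreasing. For A > 0 define Ψ₀(A) := ∫_{(A,∞)} Π(du) ∫_0^{u−A} e^{−Φy} g(y+A−u) dy + ∫_0^∞ e^{−Φy} h(y+A) dy, and assume both integrals converge absolutely for every A > 0. Then Ψ₀ is nondecreasing on (0,∞); if moreover h is strictly increasing, then Ψ₀ is strictly increasing on (0,∞), and consequently there exists at most one A* > 0 with Ψ₀(A*) = 0. -/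
/-!
With `J(s) = ∫_0^s e^{-Φy} g(y - s) dy` the first term of `Ψ₀(A)` is `∫_{(A,∞)} J(u - A) ν(du)`.
Since `g ≤ 0` is nondecreasing on `(-∞, 0]`, enlarging `s` both lowers the integrand of `J`
and adds a nonpositive piece, so `J` is nonincreasing and nonpositive on `[0, ∞)`. Raising `A`
therefore removes a nonpositive part of the domain and raises the integrand on the rest. The
second term is nondecreasing in `A` because `h` is, strictly so when `h` is strictly increasing.
-/

open MeasureTheory Real Set Filter

/-- The function `Ψ₀` of the capital-reinforcement problem:
`Ψ₀(A) = ∫_{(A,∞)} ν(du) ∫_0^{u−A} e^{−Φy} g(y+A−u) dy + ∫_0^∞ e^{−Φy} h(y+A) dy`. -/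
noncomputable def Psi0 (ν : Measure ℝ) (Φ : ℝ) (g h : ℝ → ℝ) (A : ℝ) : ℝ :=
  (∫ u in Set.Ioi A, (∫ y in (0:ℝ)..(u - A), Real.exp (-Φ * y) * g (y + A - u)) ∂ν) +
    ∫ y in Set.Ioi (0:ℝ), Real.exp (-Φ * y) * h (y + A)

section

variable {w g h : ℝ → ℝ}

lemma intervalIntegrable_mul_comp_sub (hw : Continuous w) (hg : MonotoneOn g (Iic 0))
    {a b c : ℝ} (hac : a ≤ c) (hbc : b ≤ c) :
    IntervalIntegrable (fun y => w y * g (y - c)) volume a b := by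
  refine IntervalIntegrable.continuousOn_mul (MonotoneOn.intervalIntegrable ?_) hw.continuousOn
  intro x hx y hy hxy
  have hxc : x ≤ c := hx.2.trans (max_le hac hbc)
  have hyc : y ≤ c := hy.2.trans (max_le hac hbc)
  exact hg (sub_nonpos.2 hxc) (sub_nonpos.2 hyc) (sub_le_sub_right hxy c)

lemma antitoneOn_integral_mul_comp_sub (hw : Continuous w) (hw0 : ∀ y, 0 ≤ w y)
    (hg : MonotoneOn g (Iic 0)) (hg0 : ∀ x ≤ 0, g x ≤ 0) :
    AntitoneOn (fun s => ∫ y in (0:ℝ)..s, w y * g (y - s)) (Ici 0) := by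
  intro s₁ (hs₁ : 0 ≤ s₁) s₂ _ h12
  calc (∫ y in (0:ℝ)..s₂, w y * g (y - s₂))
      = (∫ y in (0:ℝ)..s₁, w y * g (y - s₂)) + ∫ y in s₁..s₂, w y * g (y - s₂) :=
        (intervalIntegral.integral_add_adjacent_intervals
          (intervalIntegrable_mul_comp_sub hw hg (by linarith) h12)
          (intervalIntegrable_mul_comp_sub hw hg h12 le_rfl)).symm
    _ ≤ (∫ y in (0:ℝ)..s₁, w y * g (y - s₂)) + 0 := by
        gcongr
        rw [intervalIntegral.integral_of_le h12]
        exact setIntegral_nonpos measurableSet_Ioc fun y hy =>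
          mul_nonpos_of_nonneg_of_nonpos (hw0 y) (hg0 _ (sub_nonpos.2 hy.2))
    _ ≤ ∫ y in (0:ℝ)..s₁, w y * g (y - s₁) := by
        rw [add_zero]
        refine intervalIntegral.integral_mono_on hs₁
          (intervalIntegrable_mul_comp_sub hw hg (by linarith) h12)
          (intervalIntegrable_mul_comp_sub hw hg hs₁ le_rfl) fun y hy => ?_
        have hy₂ : y - s₂ ≤ 0 := by linarith [hy.2]
        have hy₁ : y - s₁ ≤ 0 := by linarith [hy.2]
        exact mul_le_mul_of_nonneg_left (hg hy₂ hy₁ (by linarith)) (hw0 y)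

lemma monotoneOn_setIntegral_Ioi_comp_sub {ν : Measure ℝ} {J : ℝ → ℝ} {S : Set ℝ}
    (hJ : AntitoneOn J (Ici 0)) (hJ0 : J 0 ≤ 0)
    (hint : ∀ A ∈ S, IntegrableOn (fun u => J (u - A)) (Ioi A) ν) :
    MonotoneOn (fun A => ∫ u in Ioi A, J (u - A) ∂ν) S := by
  intro A₁ h₁ A₂ h₂ h12
  have hJ_nonpos : ∀ u ∈ Ioi A₁, J (u - A₁) ≤ 0 := fun u hu =>
    have hu : 0 ≤ u - A₁ := sub_nonneg.2 (le_of_lt hu)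
    (hJ self_mem_Ici hu hu).trans hJ0
  calc (∫ u in Ioi A₁, J (u - A₁) ∂ν) ≤ ∫ u in Ioi A₂, J (u - A₁) ∂ν := by
        rw [← neg_le_neg_iff, ← integral_neg, ← integral_neg]
        refine setIntegral_mono_set (hint A₁ h₁).neg ?_ (Ioi_subset_Ioi h12).eventuallyLE
        filter_upwards [ae_restrict_mem measurableSet_Ioi] with u hu
        exact neg_nonneg.2 (hJ_nonpos u hu)
    _ ≤ ∫ u in Ioi A₂, J (u - A₂) ∂ν := by
        refine setIntegral_mono_on ((hint A₁ h₁).mono_set (Ioi_subset_Ioi h12)) (hint A₂ h₂)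
          measurableSet_Ioi fun u hu => ?_
        have hu : A₂ < u := hu
        have hu₁ : 0 ≤ u - A₁ := by linarith
        exact hJ (sub_nonneg.2 hu.le) hu₁ (sub_le_sub_left h12 u)

lemma monotoneOn_setIntegral_mul_comp_add {μ : Measure ℝ} {s S : Set ℝ} (hw : ∀ y, 0 ≤ w y)
    (hh : Monotone h) (hint : ∀ A ∈ S, IntegrableOn (fun y => w y * h (y + A)) s μ) :
    MonotoneOn (fun A => ∫ y in s, w y * h (y + A) ∂μ) S := fun A₁ h₁ A₂ h₂ h12 =>
  setIntegral_mono (hint A₁ h₁) (hint A₂ h₂) fun y =>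
    mul_le_mul_of_nonneg_left (hh (add_le_add_right h12 y)) (hw y)

lemma strictMonoOn_setIntegral_mul_comp_add {μ : Measure ℝ} {s S : Set ℝ} (hμs : μ s ≠ 0)
    (hw : ∀ y, 0 < w y) (hh : StrictMono h)
    (hint : ∀ A ∈ S, IntegrableOn (fun y => w y * h (y + A)) s μ) :
    StrictMonoOn (fun A => ∫ y in s, w y * h (y + A) ∂μ) S := by
  intro A₁ h₁ A₂ h₂ h12
  have hpos : ∀ y, 0 < w y * h (y + A₂) - w y * h (y + A₁) := fun y => by
    rw [← mul_sub]
    exact mul_pos (hw y) (sub_pos.2 (hh (add_lt_add_right h12 y)))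
  have hsupp : Function.support (fun y => w y * h (y + A₂) - w y * h (y + A₁)) = univ :=
    eq_univ_of_forall fun y => (hpos y).ne'
  have hdiff : 0 < ∫ y in s, (w y * h (y + A₂) - w y * h (y + A₁)) ∂μ := by
    rw [integral_pos_iff_support_of_nonneg (fun y => (hpos y).le)
      ((hint A₂ h₂).sub (hint A₁ h₁)), hsupp, Measure.restrict_apply_univ]
    exact pos_iff_ne_zero.2 hμs
  rw [integral_sub (hint A₂ h₂) (hint A₁ h₁)] at hdiff
  exact sub_pos.1 hdiff

end

theorem Psi0_monotone_general
    (ν : Measure ℝ) (Φ : ℝ) (g h : ℝ → ℝ)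
    (hgneg : ∀ x ≤ (0:ℝ), g x ≤ 0)
    (hgmono : MonotoneOn g (Set.Iic 0))
    (hhmono : Monotone h)
    (habs1' : ∀ A > (0:ℝ), IntegrableOn
      (fun u => ∫ y in (0:ℝ)..(u - A), Real.exp (-Φ * y) * g (y + A - u)) (Set.Ioi A) ν)
    (habs2 : ∀ A > (0:ℝ),
      IntegrableOn (fun y => Real.exp (-Φ * y) * h (y + A)) (Set.Ioi 0)) :
    MonotoneOn (Psi0 ν Φ g h) (Set.Ioi 0)
    ∧ (StrictMono h →
        StrictMonoOn (Psi0 ν Φ g h) (Set.Ioi 0)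
        ∧ ∀ A₁ ∈ Set.Ioi (0:ℝ), ∀ A₂ ∈ Set.Ioi (0:ℝ),
            Psi0 ν Φ g h A₁ = 0 → Psi0 ν Φ g h A₂ = 0 → A₁ = A₂) := by
  set J : ℝ → ℝ := fun s => ∫ y in (0:ℝ)..s, exp (-Φ * y) * g (y - s)
  have hJ_comp : ∀ A u, J (u - A) = ∫ y in (0:ℝ)..(u - A), exp (-Φ * y) * g (y + A - u) :=
    fun A u => by simp only [J, sub_sub_eq_add_sub]
  have hPsi0 : Psi0 ν Φ g h =
      (fun A => ∫ u in Ioi A, J (u - A) ∂ν) + fun A => ∫ y in Ioi 0, exp (-Φ * y) * h (y + A) := by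
    funext A
    simp only [Psi0, Pi.add_apply, hJ_comp]
  have hJ : AntitoneOn J (Ici 0) :=
    antitoneOn_integral_mul_comp_sub (by fun_prop) (fun y => (exp_pos _).le) hgmono hgneg
  have hfirst : MonotoneOn (fun A => ∫ u in Ioi A, J (u - A) ∂ν) (Ioi 0) :=
    monotoneOn_setIntegral_Ioi_comp_sub hJ (by simp [J])
      fun A hA => by simpa only [hJ_comp] using habs1' A hA
  refine ⟨hPsi0 ▸ hfirst.add
    (monotoneOn_setIntegral_mul_comp_add (fun y => (exp_pos _).le) hhmono habs2), fun hstrict => ?_⟩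
  have hsm : StrictMonoOn (Psi0 ν Φ g h) (Ioi 0) := hPsi0 ▸ hfirst.add_strictMono
    (strictMonoOn_setIntegral_mul_comp_add (by simp) (fun y => exp_pos _) hstrict habs2)
  exact ⟨hsm, fun A₁ hA₁ A₂ hA₂ e₁ e₂ => hsm.injOn hA₁ hA₂ (e₁.trans e₂.symm)⟩

/-- with `g = 0` on `(0,∞)`, `g ≤ 0` nondecreasing on `(−∞,0]`, and
`h` positive nondecreasing, `Ψ₀` is nondecreasing on `(0,∞)`; if `h` is strictly
increasing then `Ψ₀` is strictly increasing, so it has at most one root `A* > 0`. -/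
theorem Psi0_monotone
    (ν : Measure ℝ) (Φ : ℝ) (g h : ℝ → ℝ)
    (hν : ∫⁻ z in Set.Ioi (0:ℝ), ENNReal.ofReal (min 1 (z ^ 2)) ∂ν < ⊤)
    (hΦ : 0 < Φ)
    (hgm : Measurable g)
    (hg0 : ∀ x > (0:ℝ), g x = 0)
    (hgneg : ∀ x ≤ (0:ℝ), g x ≤ 0)
    (hgmono : MonotoneOn g (Set.Iic 0))
    (hhpos : ∀ x : ℝ, 0 < h x)
    (hhmono : Monotone h)
    (habs1 : ∀ A > (0:ℝ),
      (∫⁻ u in Set.Ioi A,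
        (∫⁻ y in Set.Ioo (0:ℝ) (u - A),
          ENNReal.ofReal (Real.exp (-Φ * y) * |g (y + A - u)|)) ∂ν) < ⊤)
    (habs1' : ∀ A > (0:ℝ), IntegrableOn
      (fun u => ∫ y in (0:ℝ)..(u - A), Real.exp (-Φ * y) * g (y + A - u)) (Set.Ioi A) ν)
    (habs2 : ∀ A > (0:ℝ),
      IntegrableOn (fun y => Real.exp (-Φ * y) * h (y + A)) (Set.Ioi 0)) :
    MonotoneOn (Psi0 ν Φ g h) (Set.Ioi 0)
    ∧ (StrictMono h →
        StrictMonoOn (Psi0 ν Φ g h) (Set.Ioi 0)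
        ∧ ∀ A₁ ∈ Set.Ioi (0:ℝ), ∀ A₂ ∈ Set.Ioi (0:ℝ),
            Psi0 ν Φ g h A₁ = 0 → Psi0 ν Φ g h A₂ = 0 → A₁ = A₂) :=
  Psi0_monotone_general ν Φ g h hgneg hgmono hhmono habs1' habs2
end

section
/- Assume g : ℝ → ℝ is measurable with g = 0 on (0,∞) and g ≤ 0 nondecreasing on (−∞,0], and h : ℝ → ℝ is positive and nondecreasing. Suppose A* > 0 satisfies ∫_0^∞ e^{−Φy} h(y + A*) dy + ∫_{(A*,∞)} Π(du) ∫_0^{u−A*} e^{−Φy} g(y + A* − u) dy = 0, with both integrals absolutely convergent. Then for every x ∈ (0, A*): h(x) + ∫_{(x,∞)} g(x − u) Π(du) ≤ 0, where the last integral is well defined in [−∞, 0] since g ≤ 0. -/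
open MeasureTheory Real Set Filter

private lemma ofReal_max_zero (a : ℝ) : ENNReal.ofReal (max a 0) = ENNReal.ofReal a := by
  rcases le_total a 0 with h | h
  · rw [max_eq_right h, ENNReal.ofReal_zero, ENNReal.ofReal_of_nonpos h]
  · rw [max_eq_left h]

private lemma ofReal_integral_le_lintegral {α : Type*} [MeasurableSpace α] (μ : Measure α)
    (f : α → ℝ) :
    ENNReal.ofReal (∫ x, f x ∂μ) ≤ ∫⁻ x, ENNReal.ofReal (f x) ∂μ := by
  by_cases hf : Integrable f μ
  · have h1 : (∫ x, f x ∂μ) ≤ ∫ x, max (f x) 0 ∂μ :=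
      integral_mono hf hf.pos_part fun x => le_max_left _ _
    calc ENNReal.ofReal (∫ x, f x ∂μ) ≤ ENNReal.ofReal (∫ x, max (f x) 0 ∂μ) :=
          ENNReal.ofReal_le_ofReal h1
      _ = ∫⁻ x, ENNReal.ofReal (max (f x) 0) ∂μ :=
          ofReal_integral_eq_lintegral_ofReal hf.pos_part
            (ae_of_all _ fun x => le_max_right _ _)
      _ = ∫⁻ x, ENNReal.ofReal (f x) ∂μ := by simp_rw [ofReal_max_zero]
  · rw [integral_undef hf]
    simp

/-- with `g = 0` on `(0,∞)`, `g ≤ 0` nondecreasing on `(−∞,0]`, and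
`h` positive nondecreasing, if `A* > 0` satisfies
`∫_0^∞ e^{−Φy} h(y+A*) dy + ∫_{(A*,∞)} ν(du) ∫_0^{u−A*} e^{−Φy} g(y+A*−u) dy = 0`,
then for every `x ∈ (0, A*)`: `h(x) + ∫_{(x,∞)} g(x−u) ν(du) ≤ 0`, where the last
integral is well defined in `[−∞,0]` (stated as `h(x) ≤ ∫_{(x,∞)} (−g(x−u)) ν(du)`
in `[0,∞]`). -/
theorem reinforcement_variational_inequality
    (ν : Measure ℝ) (Φ Astar : ℝ) (g h : ℝ → ℝ)
    (hν : ∫⁻ z in Set.Ioi (0:ℝ), ENNReal.ofReal (min 1 (z ^ 2)) ∂ν < ⊤)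
    (hΦ : 0 < Φ)
    (hgm : Measurable g)
    (hg0 : ∀ x > (0:ℝ), g x = 0)
    (hgneg : ∀ x ≤ (0:ℝ), g x ≤ 0)
    (hgmono : MonotoneOn g (Set.Iic 0))
    (hhpos : ∀ x : ℝ, 0 < h x)
    (hhmono : Monotone h)
    (hAstar : 0 < Astar)
    (habs1 : (∫⁻ u in Set.Ioi Astar,
        (∫⁻ y in Set.Ioo (0:ℝ) (u - Astar),
          ENNReal.ofReal (Real.exp (-Φ * y) * |g (y + Astar - u)|)) ∂ν) < ⊤)
    (habs1' : IntegrableOn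
      (fun u => ∫ y in (0:ℝ)..(u - Astar), Real.exp (-Φ * y) * g (y + Astar - u))
      (Set.Ioi Astar) ν)
    (habs2 : IntegrableOn (fun y => Real.exp (-Φ * y) * h (y + Astar)) (Set.Ioi 0))
    (heq : (∫ y in Set.Ioi (0:ℝ), Real.exp (-Φ * y) * h (y + Astar)) +
        (∫ u in Set.Ioi Astar,
          (∫ y in (0:ℝ)..(u - Astar), Real.exp (-Φ * y) * g (y + Astar - u)) ∂ν) = 0) :
    ∀ x : ℝ, 0 < x → x < Astar →
      ENNReal.ofReal (h x) ≤ ∫⁻ u in Set.Ioi x, ENNReal.ofReal (-g (x - u)) ∂ν := by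
  intro x hx hxA
  have hexpInt : IntegrableOn (fun y => Real.exp (-Φ * y)) (Ioi (0:ℝ)) :=
    exp_neg_integrableOn_Ioi 0 hΦ
  have hexpVal : (∫ y in Ioi (0:ℝ), Real.exp (-Φ * y)) = Φ⁻¹ := by
    have h1 := integral_comp_mul_left_Ioi (fun t => Real.exp (-t)) 0 hΦ
    simp only [mul_zero, integral_exp_neg_Ioi, neg_zero, Real.exp_zero, smul_eq_mul,
      mul_one] at h1
    simpa only [neg_mul] using h1
  have hE : (∫⁻ y in Ioi (0:ℝ), ENNReal.ofReal (Real.exp (-Φ * y))) = ENNReal.ofReal Φ⁻¹ := by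
    rw [← hexpVal]
    exact (ofReal_integral_eq_lintegral_ofReal hexpInt
      (ae_of_all _ fun y => (Real.exp_pos _).le)).symm
  set F : ℝ → ℝ :=
    fun u => ∫ y in (0:ℝ)..(u - Astar), Real.exp (-Φ * y) * g (y + Astar - u) with hF
  -- pointwise bound on Ioi Astar
  have key : ∀ u ∈ Ioi Astar,
      ENNReal.ofReal (-F u) ≤ ENNReal.ofReal Φ⁻¹ * ENNReal.ofReal (-g (Astar - u)) := by
    intro u hu
    have hu' : Astar < u := hu
    have hc0 : (0:ℝ) ≤ u - Astar := by linarith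
    have h1 : -F u = ∫ y in Ioo (0:ℝ) (u - Astar),
        -(Real.exp (-Φ * y) * g (y + Astar - u)) := by
      simp only [hF]
      rw [intervalIntegral.integral_of_le hc0, integral_Ioc_eq_integral_Ioo, ← integral_neg]
    rw [h1]
    calc ENNReal.ofReal (∫ y in Ioo (0:ℝ) (u - Astar),
            -(Real.exp (-Φ * y) * g (y + Astar - u)))
        ≤ ∫⁻ y in Ioo (0:ℝ) (u - Astar),
            ENNReal.ofReal (-(Real.exp (-Φ * y) * g (y + Astar - u))) :=
          ofReal_integral_le_lintegral _ _
      _ ≤ ∫⁻ y in Ioo (0:ℝ) (u - Astar),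
            ENNReal.ofReal (Real.exp (-Φ * y)) * ENNReal.ofReal (-g (Astar - u)) := by
          apply setLIntegral_mono' measurableSet_Ioo
          intro y hy
          have hy1 : 0 < y := hy.1
          have hy2 : y < u - Astar := hy.2
          have hmem1 : Astar - u ∈ Iic (0:ℝ) := by simp; linarith
          have hmem2 : y + Astar - u ∈ Iic (0:ℝ) := by simp; linarith
          have hmono : g (Astar - u) ≤ g (y + Astar - u) := by
            apply hgmono hmem1 hmem2; linarith
          have : -(Real.exp (-Φ * y) * g (y + Astar - u)) ≤
              Real.exp (-Φ * y) * (-g (Astar - u)) := by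
            rw [neg_mul_eq_mul_neg]
            exact mul_le_mul_of_nonneg_left (by linarith) (Real.exp_pos _).le
          calc ENNReal.ofReal (-(Real.exp (-Φ * y) * g (y + Astar - u)))
              ≤ ENNReal.ofReal (Real.exp (-Φ * y) * (-g (Astar - u))) :=
                ENNReal.ofReal_le_ofReal this
            _ = ENNReal.ofReal (Real.exp (-Φ * y)) * ENNReal.ofReal (-g (Astar - u)) :=
                ENNReal.ofReal_mul (Real.exp_pos _).le
      _ ≤ ∫⁻ y in Ioi (0:ℝ),
            ENNReal.ofReal (Real.exp (-Φ * y)) * ENNReal.ofReal (-g (Astar - u)) :=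
          lintegral_mono_set Ioo_subset_Ioi_self
      _ = ENNReal.ofReal Φ⁻¹ * ENNReal.ofReal (-g (Astar - u)) := by
          rw [lintegral_mul_const' _ _ ENNReal.ofReal_ne_top, hE]
  -- lower bound for the h-integral
  have hIh_lb : Φ⁻¹ * h x ≤ ∫ y in Ioi (0:ℝ), Real.exp (-Φ * y) * h (y + Astar) := by
    have hmono : ∫ y in Ioi (0:ℝ), Real.exp (-Φ * y) * h x ≤
        ∫ y in Ioi (0:ℝ), Real.exp (-Φ * y) * h (y + Astar) := by
      apply setIntegral_mono_on (hexpInt.mul_const (h x)) habs2 measurableSet_Ioi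
      intro y hy
      have hy' : 0 < y := hy
      exact mul_le_mul_of_nonneg_left (hhmono (by linarith)) (Real.exp_pos _).le
    rwa [integral_mul_const, hexpVal] at hmono
  have hIh : h x ≤ Φ * ∫ y in Ioi (0:ℝ), Real.exp (-Φ * y) * h (y + Astar) := by
    have h2 := mul_le_mul_of_nonneg_left hIh_lb hΦ.le
    rwa [← mul_assoc, mul_inv_cancel₀ hΦ.ne', one_mul] at h2
  have hIheq : (∫ y in Ioi (0:ℝ), Real.exp (-Φ * y) * h (y + Astar)) =
      ∫ u in Ioi Astar, -F u ∂ν := by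
    rw [integral_neg]
    linarith [heq]
  calc ENNReal.ofReal (h x)
      ≤ ENNReal.ofReal (Φ * ∫ y in Ioi (0:ℝ), Real.exp (-Φ * y) * h (y + Astar)) :=
        ENNReal.ofReal_le_ofReal hIh
    _ = ENNReal.ofReal Φ *
        ENNReal.ofReal (∫ u in Ioi Astar, -F u ∂ν) := by
        rw [ENNReal.ofReal_mul hΦ.le, hIheq]
    _ ≤ ENNReal.ofReal Φ * ∫⁻ u in Ioi Astar, ENNReal.ofReal (-F u) ∂ν :=
        mul_le_mul_right (ofReal_integral_le_lintegral _ _) _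
    _ ≤ ENNReal.ofReal Φ *
        ∫⁻ u in Ioi Astar, ENNReal.ofReal Φ⁻¹ * ENNReal.ofReal (-g (Astar - u)) ∂ν :=
        mul_le_mul_right (setLIntegral_mono' measurableSet_Ioi key) _
    _ = ENNReal.ofReal Φ * (ENNReal.ofReal Φ⁻¹ *
        ∫⁻ u in Ioi Astar, ENNReal.ofReal (-g (Astar - u)) ∂ν) := by
        rw [lintegral_const_mul' _ _ ENNReal.ofReal_ne_top]
    _ = ∫⁻ u in Ioi Astar, ENNReal.ofReal (-g (Astar - u)) ∂ν := by
        rw [← mul_assoc, ← ENNReal.ofReal_mul hΦ.le, mul_inv_cancel₀ hΦ.ne',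
          ENNReal.ofReal_one, one_mul]
    _ ≤ ∫⁻ u in Ioi Astar, ENNReal.ofReal (-g (x - u)) ∂ν := by
        apply setLIntegral_mono' measurableSet_Ioi
        intro u hu
        have hu' : Astar < u := hu
        have hmono : g (x - u) ≤ g (Astar - u) :=
          hgmono (by simp; linarith) (by simp; linarith) (by linarith)
        exact ENNReal.ofReal_le_ofReal (by linarith)
    _ ≤ ∫⁻ u in Ioi x, ENNReal.ofReal (-g (x - u)) ∂ν :=
        lintegral_mono_set (Ioi_subset_Ioi hxA.le)
end
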